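/- arXiv:2010.07579 — 5 statements merged into one kernel-verified Lean document; each statement's English description precedes it below -/
import Mathlib

section
/- Let τ ∈ 𝓕′ and n ≥ 0, and set τ₄^(n) = [[−2ⁿ/z₁(τ), −z₃(τ)/z₁(τ)],[−z₃(τ)/z₁(τ), 2^{−n}(z₂(τ) − z₃(τ)²/z₁(τ))]]. Then |y₃(τ₄^(n))| ≤ (3/2^{n+2})·y₁(τ₄^(n)), y₃(τ₄^(n))² ≤ (3/7)·y₁(τ₄^(n))·y₂(τ₄^(n)), and |x₂(τ₄^(n))| ≤ 9/2^{n+3}. -/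
open Complex

noncomputable section

/-- 2×2 complex matrices. -/
abbrev Mat2 := Matrix (Fin 2) (Fin 2) ℂ

/-- Membership in the genus-2 Siegel half space: symmetric with
positive definite imaginary part. -/
def inH2 (τ : Mat2) : Prop :=
  τ.IsSymm ∧ (τ.map Complex.im).PosDef

/-- Genus-2 theta constants with characteristics `a, b ∈ {0,1}²`. -/
def theta (a b : Fin 2 → ℤ) (τ : Mat2) : ℂ :=
  ∑' m : Fin 2 → ℤ,
    Complex.exp ((Real.pi : ℂ) * Complex.I *
      ((∑ i : Fin 2, ∑ j : Fin 2,
          ((m i : ℂ) + (a i : ℂ) / 2) * τ i j * ((m j : ℂ) + (a j : ℂ) / 2)) +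
        ∑ i : Fin 2, ((m i : ℂ) + (a i : ℂ) / 2) * ((b i : ℂ) / 2)))

/-- Numbered theta constants: `θ_{(a₀,a₁),(b₀,b₁)} = θ_j` with
`j = b₀ + 2 b₁ + 4 a₀ + 8 a₁`. -/
def thetaIdx (j : ℕ) (τ : Mat2) : ℂ :=
  theta ![((j / 4 % 2 : ℕ) : ℤ), ((j / 8 % 2 : ℕ) : ℤ)]
    ![((j % 2 : ℕ) : ℤ), ((j / 2 % 2 : ℕ) : ℤ)] τ

def z1 (τ : Mat2) : ℂ := τ 0 0
def z2 (τ : Mat2) : ℂ := τ 1 1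
def z3 (τ : Mat2) : ℂ := τ 0 1
def x1 (τ : Mat2) : ℝ := (z1 τ).re
def x2 (τ : Mat2) : ℝ := (z2 τ).re
def x3 (τ : Mat2) : ℝ := (z3 τ).re
def y1 (τ : Mat2) : ℝ := (z1 τ).im
def y2 (τ : Mat2) : ℝ := (z2 τ).im
def y3 (τ : Mat2) : ℝ := (z3 τ).im
def q1 (τ : Mat2) : ℝ := Real.exp (-Real.pi * y1 τ)
def q2 (τ : Mat2) : ℝ := Real.exp (-Real.pi * y2 τ)

/-- The domain 𝓕′ containing the fundamental domain 𝓕₂. -/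
def inF' (τ : Mat2) : Prop :=
  inH2 τ ∧ |x1 τ| ≤ 1/2 ∧ |x2 τ| ≤ 1/2 ∧ |x3 τ| ≤ 1/2 ∧
    2 * |y3 τ| ≤ y1 τ ∧ y1 τ ≤ y2 τ ∧ Real.sqrt 3 / 2 ≤ y1 τ ∧
    1 ≤ ‖z1 τ‖ ∧ 1 ≤ ‖z2 τ‖

/-- A set of complex numbers is in good position if it is contained in
an open quarter plane. -/
def GoodPosition (s : Set ℂ) : Prop :=
  ∃ u : ℂ, ‖u‖ = 1 ∧ ∀ z ∈ s, 0 < (u * z).re ∧ 0 < (u * z).im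

/-- Action of a block matrix `[[A,B],[C,D]]` on the Siegel half space. -/
def actBlocks (A B C D τ : Mat2) : Mat2 := (A * τ + B) * (C * τ + D)⁻¹

/-- The matrices S₁, S₂, S₃. -/
def Smat : ℕ → Mat2
  | 1 => !![1, 0; 0, 0]
  | 2 => !![0, 0; 0, 1]
  | 3 => !![0, 1; 1, 0]
  | _ => 0

/-- Action of γ_k on ℋ₂, for 0 ≤ k ≤ 3: γ₀ = I₄ and
γ_k = [[−I₂, −S_k],[S_k, −I₂+S_k²]] for k = 1,2,3. -/
def gammaAction (k : ℕ) (τ : Mat2) : Mat2 :=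
  if k = 0 then τ
  else actBlocks (-1) (-(Smat k)) (Smat k) (-1 + Smat k ^ 2) τ

/-- τ₁⁽ⁿ⁾ = [[2⁻ⁿz₁, z₃],[z₃, 2ⁿz₂]]. -/
def tau1n (n : ℕ) (τ : Mat2) : Mat2 :=
  !![((2:ℂ)^n)⁻¹ * z1 τ, z3 τ; z3 τ, (2:ℂ)^n * z2 τ]

/-- τ₂⁽ⁿ⁾ = [[2ⁿz₁, z₃],[z₃, 2⁻ⁿz₂]]. -/
def tau2n (n : ℕ) (τ : Mat2) : Mat2 :=
  !![(2:ℂ)^n * z1 τ, z3 τ; z3 τ, ((2:ℂ)^n)⁻¹ * z2 τ]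

/-- τ₄⁽ⁿ⁾ = [[−2ⁿ/z₁, −z₃/z₁],[−z₃/z₁, 2⁻ⁿ(z₂ − z₃²/z₁)]]. -/
def tau4n (n : ℕ) (τ : Mat2) : Mat2 :=
  !![-(2:ℂ)^n / z1 τ, -z3 τ / z1 τ;
     -z3 τ / z1 τ, ((2:ℂ)^n)⁻¹ * (z2 τ - z3 τ ^ 2 / z1 τ)]

/-- Smallest eigenvalue of Im τ, for a symmetric 2×2 matrix τ. -/
def lambda1 (τ : Mat2) : ℝ :=
  (y1 τ + y2 τ - Real.sqrt ((y1 τ - y2 τ) ^ 2 + 4 * y3 τ ^ 2)) / 2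

/-- r(τ) = min{λ₁(τ), y₁(τ)/2, y₂(τ)/2}. -/
def rmin (τ : Mat2) : ℝ := min (lambda1 τ) (min (y1 τ / 2) (y2 τ / 2))

def xi46 (τ : Mat2) : ℂ := 2 * Complex.exp ((Real.pi : ℂ) * Complex.I * z1 τ / 4)

def xi89 (τ : Mat2) : ℂ := 2 * Complex.exp ((Real.pi : ℂ) * Complex.I * z2 τ / 4)

def xi0 (τ : Mat2) : ℂ :=
  1 + 2 * Complex.exp ((Real.pi : ℂ) * Complex.I * z1 τ) +
    2 * Complex.exp ((Real.pi : ℂ) * Complex.I * z2 τ)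

def xi02 (τ : Mat2) : ℂ := 1 + 2 * Complex.exp ((Real.pi : ℂ) * Complex.I * z1 τ)

def xi01 (τ : Mat2) : ℂ := 1 + 2 * Complex.exp ((Real.pi : ℂ) * Complex.I * z2 τ)

def xi12 (τ : Mat2) : ℂ :=
  Complex.exp ((Real.pi : ℂ) * Complex.I * (z1 τ + z2 τ) / 4) *
    (Complex.exp ((Real.pi : ℂ) * Complex.I * z3 τ / 2) +
      Complex.exp (-((Real.pi : ℂ) * Complex.I * z3 τ / 2)))

/-- ρ_{4,6}^{(k)}(q₁,q₂); here `s` plays the role of q₁ and `t` of q₂. -/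
def rho46 (k s t : ℝ) : ℝ :=
  s ^ (2:ℝ) / (1 - s ^ (4:ℝ)) + t ^ (1 - 1/k) / (1 - t ^ (3 - 1/k)) +
    t ^ (1 + 1/k) / (1 - t ^ (3 + 1/k)) +
    s ^ ((7:ℝ)/8) * t ^ ((1:ℝ)/2) / ((1 - t ^ ((3:ℝ)/2)) * (1 - s ^ (2:ℝ))) +
    s ^ ((25:ℝ)/8) * t ^ ((3:ℝ)/2) / ((1 - t ^ ((9:ℝ)/2)) * (1 - s ^ (6:ℝ)))

/-- ρ_{8,9}^{(k)}(q₁,q₂); here `s` plays the role of q₁ and `t` of q₂. -/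
def rho89 (k s t : ℝ) : ℝ :=
  t ^ (2:ℝ) / (1 - t ^ (4:ℝ)) + s ^ (1 - 1/k) / (1 - s ^ (3 - 1/k)) +
    s ^ (1 + 1/k) / (1 - s ^ (3 + 1/k)) +
    t ^ ((7:ℝ)/8) * s ^ ((1:ℝ)/2) / ((1 - s ^ ((3:ℝ)/2)) * (1 - t ^ (2:ℝ))) +
    t ^ ((25:ℝ)/8) * s ^ ((3:ℝ)/2) / ((1 - s ^ ((9:ℝ)/2)) * (1 - t ^ (6:ℝ)))

/-- ρ₀(q₁,q₂). -/
def rho0 (s t : ℝ) : ℝ :=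
  2 * s ^ (4:ℝ) / (1 - s ^ (5:ℝ)) + 2 * t ^ (4:ℝ) / (1 - t ^ (5:ℝ)) +
    2 * s ^ ((1:ℝ)/2) * t ^ ((1:ℝ)/2) / ((1 - s ^ ((3:ℝ)/2)) * (1 - t ^ ((3:ℝ)/2))) +
    2 * s ^ ((3:ℝ)/2) * t ^ ((3:ℝ)/2) / ((1 - s ^ ((9:ℝ)/2)) * (1 - t ^ ((9:ℝ)/2)))

/-- ρ₁₂(q₁,q₂). -/
def rho12 (s t : ℝ) : ℝ :=
  s ^ ((3:ℝ)/2) / (1 - s ^ ((7:ℝ)/2)) + s ^ ((5:ℝ)/2) / (1 - s ^ ((9:ℝ)/2)) +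
    t ^ ((3:ℝ)/2) / (1 - t ^ ((7:ℝ)/2)) + t ^ ((5:ℝ)/2) / (1 - t ^ ((9:ℝ)/2)) +
    s ^ ((7:ℝ)/8) * t ^ ((7:ℝ)/8) / ((1 - s ^ (2:ℝ)) * (1 - t ^ (2:ℝ))) +
    s ^ ((25:ℝ)/8) * t ^ ((25:ℝ)/8) / ((1 - s ^ (6:ℝ)) * (1 - t ^ (6:ℝ)))

/-- α = √(3/7). -/
def alph : ℝ := Real.sqrt (3/7)

/-- ρ'_{0,1}^{(k)}(q₁,q₂); here `s` plays the role of q₁ and `t` of q₂. -/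
def rho01' (k s t : ℝ) : ℝ :=
  2 * t ^ (4:ℝ) / (1 - t ^ (5:ℝ)) + 2 * s / (1 - s ^ (3:ℝ)) +
    2 * s ^ (1 - 2/k) * t / (1 - s ^ (3 - 2/k)) +
    2 * s ^ (1 + 2/k) * t / (1 - s ^ (3 + 2/k)) +
    2 * s ^ (1 - alph) * t ^ (4 * (1 - alph)) /
      ((1 - s ^ (3 * (1 - alph))) * (1 - t ^ (5 * (1 - alph)))) +
    2 * s ^ (1 + alph) * t ^ (4 * (1 + alph)) /
      ((1 - s ^ (3 * (1 + alph))) * (1 - t ^ (5 * (1 + alph))))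

/-- ρ'_{8,9}^{(k)}(q₁,q₂); here `s` plays the role of q₁ and `t` of q₂. -/
def rho89' (k s t : ℝ) : ℝ :=
  t ^ (2:ℝ) / (1 - t ^ (4:ℝ)) + s ^ (1 - 1/k) / (1 - s ^ (3 - 1/k)) +
    s ^ (1 + 1/k) / (1 - s ^ (3 + 1/k)) +
    t ^ (2 - (9/4) * alph) * s ^ (1 - alph) /
      ((1 - t ^ (4 * (1 - alph))) * (1 - s ^ (3 * (1 - alph)))) +
    t ^ (2 + (9/4) * alph) * s ^ (1 + alph) /
      ((1 - t ^ (4 * (1 + alph))) * (1 - s ^ (3 * (1 + alph))))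

/-!
Write `z₁ = a + i b` and `d = |z₁|²`. Then `y₁(τ₄⁽ⁿ⁾) = 2ⁿ b / d` and
`y₃(τ₄⁽ⁿ⁾) = (x₃ b - a y₃) / d`, and the reduction conditions give `|x₃ b - a y₃| ≤ 3b/4`.
Up to a translation and the scaling by `2ⁿ`, `τ₄⁽ⁿ⁾` is the image of `τ` under `γ₁`, for which
`det (Cτ + D) = -z₁`; hence `det Im τ₄⁽ⁿ⁾ = det Im τ / d ≥ (3/4) b² / d`, and with `d ≥ 1` this beats
`y₃(τ₄⁽ⁿ⁾)² ≤ (9/16) b² / d²` by the margin needed for `3/7`. Finally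
`2ⁿ x₂(τ₄⁽ⁿ⁾) = x₂ - Re (z₃² / z₁)`, and `x₃², y₃² ≤ d / 4` bound the last term by `5/8`.
-/

lemma abs_mul_sub_mul_le_of_abs_le {a b u v : ℝ} (ha : |a| ≤ 1/2) (hu : |u| ≤ 1/2)
    (hv : 2 * |v| ≤ b) : |u * b - a * v| ≤ 3/4 * b := by
  have hb : 0 ≤ b := le_trans (by positivity) hv
  calc |u * b - a * v| ≤ |u| * b + |a| * |v| := by
        simpa only [abs_mul, abs_of_nonneg hb] using abs_sub (u * b) (a * v)
    _ ≤ 1/2 * b + 1/2 * (b / 2) := by gcongr; linarith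
    _ = 3/4 * b := by ring

lemma abs_re_sq_div_le {w z : ℂ} (hz : 1 ≤ ‖z‖) (hzr : |z.re| ≤ 1/2) (hwr : |w.re| ≤ 1/2)
    (hwi : 2 * |w.im| ≤ z.im) : |(w ^ 2 / z).re| ≤ 5/8 := by
  obtain ⟨a, b⟩ := z
  obtain ⟨u, v⟩ := w
  simp only at hzr hwr hwi ⊢
  have hd : 1 ≤ normSq ⟨a, b⟩ := by rw [← Complex.sq_norm]; nlinarith
  rw [normSq_mk] at hd
  have hb : 0 ≤ b := le_trans (by positivity) hwi
  have hu2 : u ^ 2 ≤ 1/4 := by nlinarith [sq_abs u, abs_nonneg u]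
  have hv2 : v ^ 2 ≤ b ^ 2 / 4 := by nlinarith [sq_abs v, abs_nonneg v]
  have hdiff : |u ^ 2 - v ^ 2| ≤ (a * a + b * b) / 4 := by
    rw [abs_le]; constructor <;> nlinarith [sq_nonneg u, sq_nonneg v, sq_nonneg a]
  have hnum : |(u ^ 2 - v ^ 2) * a + 2 * (u * v) * b| ≤ 5/8 * (a * a + b * b) :=
    calc |(u ^ 2 - v ^ 2) * a + 2 * (u * v) * b|
        ≤ |u ^ 2 - v ^ 2| * |a| + 2 * (|u| * |v|) * b :=
          (abs_add_le _ _).trans_eq (by simp only [abs_mul, abs_two, abs_of_nonneg hb])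
      _ ≤ (a * a + b * b) / 4 * (1/2) + 2 * (1/2 * (b / 2)) * b := by
          gcongr; linarith
      _ ≤ 5/8 * (a * a + b * b) := by nlinarith [sq_nonneg a]
  have hre : (⟨u, v⟩ ^ 2 / ⟨a, b⟩ : ℂ).re =
      ((u ^ 2 - v ^ 2) * a + 2 * (u * v) * b) / (a * a + b * b) := by
    rw [div_re, normSq_mk, pow_two]; simp only [mul_re, mul_im]; ring
  have hd0 : 0 < a * a + b * b := by linarith
  rw [hre, abs_div, abs_of_pos hd0, div_le_iff₀ hd0]
  exact hnum

section tau4n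

variable {τ : Mat2} (n : ℕ)

lemma z1_tau4n : z1 (tau4n n τ) = -((2 ^ n : ℝ) : ℂ) / z1 τ := by
  simp [z1, tau4n]

lemma z2_tau4n : z2 (tau4n n τ) = (((2 ^ n)⁻¹ : ℝ) : ℂ) * (z2 τ - z3 τ ^ 2 / z1 τ) := by
  simp [z2, tau4n]

lemma z3_tau4n : z3 (tau4n n τ) = -z3 τ / z1 τ := rfl

lemma y1_tau4n : y1 (tau4n n τ) = 2 ^ n * y1 τ / normSq (z1 τ) := by
  rw [y1, y1, z1_tau4n, div_im]
  simp only [neg_re, neg_im, ofReal_re, ofReal_im]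
  ring

lemma y3_tau4n : y3 (tau4n n τ) = (x3 τ * y1 τ - x1 τ * y3 τ) / normSq (z1 τ) := by
  rw [y3, z3_tau4n, div_im]
  simp only [neg_re, neg_im, x1, x3, y1, y3]
  ring

lemma x2_tau4n : x2 (tau4n n τ) = (x2 τ - (z3 τ ^ 2 / z1 τ).re) / 2 ^ n := by
  rw [x2, z2_tau4n, re_ofReal_mul, sub_re, x2]
  ring

lemma y1_mul_y2_sub_sq_y3_tau4n (h : z1 τ ≠ 0) :
    y1 (tau4n n τ) * y2 (tau4n n τ) - y3 (tau4n n τ) ^ 2 =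
      (y1 τ * y2 τ - y3 τ ^ 2) / normSq (z1 τ) := by
  have hd : normSq (z1 τ) ≠ 0 := normSq_eq_zero.not.mpr h
  rw [y1_tau4n, y3_tau4n, y2, z2_tau4n, im_ofReal_mul, sub_im, div_im, pow_two, mul_im, mul_re]
  simp only [x1, x3, y1, y2, y3] at hd ⊢
  field_simp
  rw [normSq_apply]
  ring

end tau4n

namespace inF'

variable {τ : Mat2} (n : ℕ)

lemma one_le_normSq_z1 (hτ : inF' τ) : 1 ≤ normSq (z1 τ) := by
  obtain ⟨-, -, -, -, -, -, -, hz1, -⟩ := hτ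
  rw [← Complex.sq_norm]
  nlinarith

lemma y1_pos (hτ : inF' τ) : 0 < y1 τ := by
  obtain ⟨-, -, -, -, -, -, hy1, -⟩ := hτ
  exact lt_of_lt_of_le (by positivity) hy1

lemma abs_y3_tau4n_le_y1_div_normSq (hτ : inF' τ) :
    |y3 (tau4n n τ)| ≤ 3/4 * y1 τ / normSq (z1 τ) := by
  have hd : 0 < normSq (z1 τ) := one_pos.trans_le hτ.one_le_normSq_z1
  obtain ⟨-, hx1, -, hx3, hy3, -⟩ := hτ
  rw [y3_tau4n, abs_div, abs_of_pos hd]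
  gcongr
  exact abs_mul_sub_mul_le_of_abs_le hx1 hx3 hy3

lemma abs_y3_tau4n_le (hτ : inF' τ) :
    |y3 (tau4n n τ)| ≤ 3 / 2 ^ (n + 2) * y1 (tau4n n τ) := by
  convert hτ.abs_y3_tau4n_le_y1_div_normSq n using 1
  rw [y1_tau4n, pow_add]
  field_simp
  ring

lemma sq_y3_tau4n_le (hτ : inF' τ) :
    y3 (tau4n n τ) ^ 2 ≤ 3/7 * y1 (tau4n n τ) * y2 (tau4n n τ) := by
  have hd := hτ.one_le_normSq_z1
  have hb := hτ.y1_pos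
  have hY3 := hτ.abs_y3_tau4n_le_y1_div_normSq n
  obtain ⟨-, -, -, -, hy3, hy12, -⟩ := hτ
  have hz1 : z1 τ ≠ 0 := fun h ↦ by norm_num [h] at hd
  have hy3sq : y3 τ ^ 2 ≤ y1 τ ^ 2 / 4 := by nlinarith [sq_abs (y3 τ), abs_nonneg (y3 τ)]
  have hupper : y3 (tau4n n τ) ^ 2 ≤ 9/16 * (y1 τ ^ 2 / normSq (z1 τ)) :=
    calc y3 (tau4n n τ) ^ 2 = |y3 (tau4n n τ)| ^ 2 := (sq_abs _).symm
      _ ≤ (3/4 * y1 τ / normSq (z1 τ)) ^ 2 := by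
          gcongr
      _ = 9/16 * (y1 τ ^ 2 / normSq (z1 τ)) / normSq (z1 τ) := by ring
      _ ≤ 9/16 * (y1 τ ^ 2 / normSq (z1 τ)) := div_le_self (by positivity) hd
  have hlower : 3/4 * (y1 τ ^ 2 / normSq (z1 τ)) ≤
      y1 (tau4n n τ) * y2 (tau4n n τ) - y3 (tau4n n τ) ^ 2 := by
    rw [y1_mul_y2_sub_sq_y3_tau4n n hz1, ← mul_div_assoc]
    gcongr
    nlinarith
  linarith

lemma abs_x2_tau4n_le (hτ : inF' τ) : |x2 (tau4n n τ)| ≤ 9 / 2 ^ (n + 3) := by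
  obtain ⟨-, hx1, hx2, hx3, hy3, -, -, hz1, -⟩ := hτ
  have hre := abs_re_sq_div_le hz1 hx1 hx3 hy3
  have h2n : (0 : ℝ) < 2 ^ n := by positivity
  rw [x2_tau4n, abs_div, abs_of_pos h2n, pow_add, div_mul_eq_div_div_swap]
  gcongr
  calc |x2 τ - (z3 τ ^ 2 / z1 τ).re| ≤ |x2 τ| + |(z3 τ ^ 2 / z1 τ).re| := abs_sub _ _
    _ ≤ 9 / 2 ^ 3 := by linarith

end inF'

/-- Estimates on the entries of τ₄⁽ⁿ⁾ for τ ∈ 𝓕′. -/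
theorem stmt_5 (τ : Mat2) (hτ : inF' τ) (n : ℕ) :
    |y3 (tau4n n τ)| ≤ 3 / 2^(n+2) * y1 (tau4n n τ) ∧
    y3 (tau4n n τ) ^ 2 ≤ 3/7 * y1 (tau4n n τ) * y2 (tau4n n τ) ∧
    |x2 (tau4n n τ)| ≤ 9 / 2^(n+3) :=
  ⟨hτ.abs_y3_tau4n_le n, hτ.sq_y3_tau4n_le n, hτ.abs_x2_tau4n_le n⟩
end
end

section
/- Let k ≥ 1 be a real number and let τ ∈ ℋ₂ satisfy y₃(τ)² ≤ (1/4)·y₁(τ)·y₂(τ) and k·|y₃(τ)| ≤ y₂(τ). Then for j ∈ {4,6}, |θ_j(τ)/ξ_{4,6}(τ) − 1| ≤ ρ_{4,6}^{(k)}(q₁(τ), q₂(τ)). -/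
open Complex

noncomputable section

/-!
For the characteristics `a = (1,0)`, `b = (0,β)` of `θ₄` and `θ₆`, the terms `m = (0,0)` and
`m = (-1,0)` of the theta series are both `exp(iπ z₁/4) = ξ_{4,6}/2`, and the term at
`m = (a - 1/2, n)` has modulus `exp(-(a²u + 2anw + n²v))` with `(u,v,w) = π(y₁,y₂,y₃)`.
The reflection `m ↦ (-1,0) - m` halves the lattice to the rows `a ≥ 1/2`. In the row `a = 1/2` the
cross term is controlled by `k|w| ≤ v`, in the rows `a ≥ 3/2` by `4w² ≤ uv`, i.e. by
`|2anw| ≤ (a²u + n²v)/2`. Bounding `a²` and `n²` from below by linear functions of the row and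
column index turns every row, and then the sum of the rows, into geometric series; their sums are
the five terms of `ρ_{4,6}^{(k)}`.
-/
open scoped Real

lemma Real.exp_add_exp_neg_le_of_abs_le {x C : ℝ} (h : |x| ≤ C) :
    rexp x + rexp (-x) ≤ rexp C + rexp (-C) := by
  have hcosh := Real.cosh_le_cosh.2 (h.trans (le_abs_self C))
  rw [Real.cosh_eq, Real.cosh_eq] at hcosh
  linarith

lemma abs_two_mul_mul_mul_le_of_sq_le {u v w : ℝ} (hu : 0 ≤ u) (hv : 0 ≤ v)
    (hw : 4 * w ^ 2 ≤ u * v) (a n : ℝ) :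
    |2 * a * n * w| ≤ (a ^ 2 * u + n ^ 2 * v) / 2 := by
  refine abs_le_of_sq_le_sq ?_ (by positivity)
  calc (2 * a * n * w) ^ 2 = a ^ 2 * n ^ 2 * (4 * w ^ 2) := by ring
    _ ≤ a ^ 2 * n ^ 2 * (u * v) := by gcongr
    _ ≤ ((a ^ 2 * u + n ^ 2 * v) / 2) ^ 2 := by nlinarith [sq_nonneg (a ^ 2 * u - n ^ 2 * v)]

lemma hasSum_rpow_geometric {t r : ℝ} (ht0 : 0 < t) (ht1 : t < 1) (hr : 0 < r) (e : ℝ) :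
    HasSum (fun n : ℕ => t ^ (e + r * n)) (t ^ e / (1 - t ^ r)) := by
  have hterm : (fun n : ℕ => t ^ (e + r * n)) = fun n => t ^ e * (t ^ r) ^ n := by
    ext n
    rw [Real.rpow_add ht0, Real.rpow_mul ht0.le, Real.rpow_natCast]
  rw [hterm, div_eq_mul_inv]
  exact (hasSum_geometric_of_lt_one (Real.rpow_nonneg ht0.le r)
    (Real.rpow_lt_one ht0.le ht1 hr)).mul_left (t ^ e)

lemma summable_and_tsum_le_of_add_one_add_neg_add_one_le {f : ℤ → ℝ} (hf : ∀ n, 0 ≤ f n)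
    {g : ℕ → ℝ} {G : ℝ} (hg : HasSum g G) (h : ∀ j : ℕ, f (j + 1) + f (-(j + 1)) ≤ g j) :
    Summable f ∧ ∑' n, f n ≤ f 0 + G := by
  have hpos : Summable fun j : ℕ => f (j + 1) :=
    hg.summable.of_nonneg_of_le (fun j => hf _) fun j => by linarith [h j, hf (-(j + 1))]
  have hneg : Summable fun j : ℕ => f (-(j + 1)) :=
    hg.summable.of_nonneg_of_le (fun j => hf _) fun j => by linarith [h j, hf (j + 1)]
  refine ⟨hpos.of_add_one_of_neg_add_one hneg, ?_⟩
  rw [tsum_of_add_one_of_neg_add_one hpos hneg]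
  linarith [hasSum_le h (hpos.hasSum.add hneg.hasSum) hg]

lemma norm_tsum_sub_sum_le {ι E : Type*} [NormedAddCommGroup E] [CompleteSpace E] {f : ι → E}
    (hf : Summable fun i => ‖f i‖) (s : Finset ι) :
    ‖∑' i, f i - ∑ i ∈ s, f i‖ ≤ ∑' i, ‖f i‖ - ∑ i ∈ s, ‖f i‖ := by
  rw [← hf.of_norm.sum_add_tsum_compl (s := s), ← hf.sum_add_tsum_compl (s := s),
    add_sub_cancel_left, add_sub_cancel_left]
  exact norm_tsum_le_tsum_norm (hf.subtype _)

section GaussTerm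

variable (u v w : ℝ)

def gaussTerm (a n : ℝ) : ℝ := rexp (-(a ^ 2 * u + 2 * a * n * w + n ^ 2 * v))

lemma gaussTerm_nonneg (a n : ℝ) : 0 ≤ gaussTerm u v w a n := (Real.exp_pos _).le

lemma gaussTerm_neg_left (a n : ℝ) : gaussTerm u v w (-a) n = gaussTerm u v w a (-n) := by
  simp only [gaussTerm]
  ring_nf

lemma gaussTerm_add_gaussTerm_neg_le {a n C : ℝ} (h : |2 * a * n * w| ≤ C) :
    gaussTerm u v w a n + gaussTerm u v w a (-n) ≤
      rexp (-(a ^ 2 * u + n ^ 2 * v) + C) + rexp (-(a ^ 2 * u + n ^ 2 * v) - C) := by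
  have hsplit : ∀ x, gaussTerm u v w a x =
      rexp (-(a ^ 2 * u + x ^ 2 * v)) * rexp (-(2 * a * x * w)) := by
    intro x
    rw [gaussTerm, ← Real.exp_add]
    ring_nf
  rw [hsplit, hsplit, neg_sq, show 2 * a * -n * w = -(2 * a * n * w) by ring, neg_neg, ← mul_add,
    sub_eq_add_neg, Real.exp_add, Real.exp_add, ← mul_add, add_comm (rexp (-(2 * a * n * w)))]
  exact mul_le_mul_of_nonneg_left (Real.exp_add_exp_neg_le_of_abs_le h) (Real.exp_pos _).le

end GaussTerm

section GaussTermBounds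

variable {k u v w : ℝ}

lemma gaussTerm_half_pair_le (hk : 0 < k) (hkw : k * |w| ≤ v) (j : ℕ) :
    gaussTerm u v w (1 / 2) (j + 1) + gaussTerm u v w (1 / 2) (-(j + 1)) ≤
      rexp (-(u / 4)) * (rexp (-v) ^ ((1 - 1 / k) + (3 - 1 / k) * j) +
        rexp (-v) ^ ((1 + 1 / k) + (3 + 1 / k) * j)) := by
  have hv : 0 ≤ v := (mul_nonneg hk.le (abs_nonneg w)).trans hkw
  have hj : 0 ≤ v * ((j : ℝ) ^ 2 - j) :=
    mul_nonneg hv (sub_nonneg.2 (by exact_mod_cast Nat.le_self_pow two_ne_zero j))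
  have hC : |2 * (1 / 2) * ((j : ℝ) + 1) * w| ≤ ((j : ℝ) + 1) * v / k := by
    rw [abs_mul, abs_of_nonneg (by positivity : (0 : ℝ) ≤ 2 * (1 / 2) * ((j : ℝ) + 1)),
      le_div_iff₀ hk]
    nlinarith
  refine (gaussTerm_add_gaussTerm_neg_le u v w hC).trans ?_
  rw [mul_add, ← Real.exp_mul, ← Real.exp_mul, ← Real.exp_add, ← Real.exp_add]
  refine add_le_add (Real.exp_le_exp.2 ?_) (Real.exp_le_exp.2 ?_)
  · linarith [show -(u / 4) + -v * (1 - 1 / k + (3 - 1 / k) * j) -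
      (-((1 / 2) ^ 2 * u + ((j : ℝ) + 1) ^ 2 * v) + ((j : ℝ) + 1) * v / k) =
        v * ((j : ℝ) ^ 2 - j) by ring]
  · linarith [show -(u / 4) + -v * (1 + 1 / k + (3 + 1 / k) * j) -
      (-((1 / 2) ^ 2 * u + ((j : ℝ) + 1) ^ 2 * v) - ((j : ℝ) + 1) * v / k) =
        v * ((j : ℝ) ^ 2 - j) by ring]

lemma gaussTerm_pair_le_of_sq_le (hu : 0 ≤ u) (hv : 0 ≤ v) (hw : 4 * w ^ 2 ≤ u * v) (i j : ℕ) :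
    gaussTerm u v w (i + 3 / 2) (j + 1) + gaussTerm u v w (i + 3 / 2) (-(j + 1)) ≤
      rexp (-(u / 4)) *
        (rexp (-u) ^ (7 / 8 + 2 * (i : ℝ)) * rexp (-v) ^ (1 / 2 + 3 / 2 * (j : ℝ)) +
          rexp (-u) ^ (25 / 8 + 6 * (i : ℝ)) * rexp (-v) ^ (3 / 2 + 9 / 2 * (j : ℝ))) := by
  have hi : 0 ≤ u * ((i : ℝ) ^ 2 - i) :=
    mul_nonneg hu (sub_nonneg.2 (by exact_mod_cast Nat.le_self_pow two_ne_zero i))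
  have hj : 0 ≤ v * ((j : ℝ) ^ 2 - j) :=
    mul_nonneg hv (sub_nonneg.2 (by exact_mod_cast Nat.le_self_pow two_ne_zero j))
  refine (gaussTerm_add_gaussTerm_neg_le u v w
    (abs_two_mul_mul_mul_le_of_sq_le hu hv hw (i + 3 / 2) (j + 1))).trans ?_
  simp only [mul_add, ← Real.exp_mul, ← Real.exp_add]
  refine add_le_add (Real.exp_le_exp.2 ?_) (Real.exp_le_exp.2 ?_) <;> nlinarith

lemma gaussTerm_zero_le (hu : 0 ≤ u) (i : ℕ) :
    gaussTerm u v w (i + 3 / 2) 0 ≤ rexp (-(u / 4)) * rexp (-u) ^ (2 + 4 * (i : ℝ)) := by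
  have hi : 0 ≤ u * ((i : ℝ) ^ 2 - i) :=
    mul_nonneg hu (sub_nonneg.2 (by exact_mod_cast Nat.le_self_pow two_ne_zero i))
  rw [gaussTerm, ← Real.exp_mul, ← Real.exp_add]
  exact Real.exp_le_exp.2 (by nlinarith)

lemma summable_and_tsum_gaussTerm_half_le (hk : 1 ≤ k) (hv : 0 < v)
    (hkw : k * |w| ≤ v) :
    Summable (fun n : ℤ => gaussTerm u v w (1 / 2) n) ∧
      ∑' n : ℤ, gaussTerm u v w (1 / 2) n ≤
        rexp (-(u / 4)) * (1 + rexp (-v) ^ (1 - 1 / k) / (1 - rexp (-v) ^ (3 - 1 / k)) +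
          rexp (-v) ^ (1 + 1 / k) / (1 - rexp (-v) ^ (3 + 1 / k))) := by
  have hk0 : 0 < k := one_pos.trans_le hk
  have hk1 : 1 / k ≤ 1 := (div_le_one hk0).2 hk
  have ht0 : 0 < rexp (-v) := Real.exp_pos _
  have ht1 : rexp (-v) < 1 := Real.exp_lt_one_iff.2 (by linarith)
  have hgeom :=
    ((hasSum_rpow_geometric ht0 ht1 (by linarith : (0 : ℝ) < 3 - 1 / k) (1 - 1 / k)).add
      (hasSum_rpow_geometric ht0 ht1 (by positivity : (0 : ℝ) < 3 + 1 / k) (1 + 1 / k))).mul_left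
        (rexp (-(u / 4)))
  obtain ⟨hsum, hle⟩ := summable_and_tsum_le_of_add_one_add_neg_add_one_le
    (f := fun n : ℤ => gaussTerm u v w (1 / 2) n) (fun n => gaussTerm_nonneg u v w _ _) hgeom
    fun j => by
      push_cast
      exact gaussTerm_half_pair_le hk0 hkw j
  have hcentre : gaussTerm u v w (1 / 2) ((0 : ℤ) : ℝ) = rexp (-(u / 4)) := by
    rw [gaussTerm]
    congr 1
    push_cast
    ring
  refine ⟨hsum, hle.trans_eq ?_⟩
  rw [hcentre]
  ring

lemma summable_and_tsum_gaussTerm_le (hu : 0 < u) (hv : 0 < v) (hw : 4 * w ^ 2 ≤ u * v) (i : ℕ) :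
    Summable (fun n : ℤ => gaussTerm u v w (i + 3 / 2) n) ∧
      ∑' n : ℤ, gaussTerm u v w (i + 3 / 2) n ≤
        rexp (-(u / 4)) * (rexp (-u) ^ (2 + 4 * (i : ℝ)) +
          rexp (-u) ^ (7 / 8 + 2 * (i : ℝ)) *
            (rexp (-v) ^ (1 / 2 : ℝ) / (1 - rexp (-v) ^ (3 / 2 : ℝ))) +
          rexp (-u) ^ (25 / 8 + 6 * (i : ℝ)) *
            (rexp (-v) ^ (3 / 2 : ℝ) / (1 - rexp (-v) ^ (9 / 2 : ℝ)))) := by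
  have ht0 : 0 < rexp (-v) := Real.exp_pos _
  have ht1 : rexp (-v) < 1 := Real.exp_lt_one_iff.2 (by linarith)
  have hgeom₁ := (hasSum_rpow_geometric ht0 ht1 (by norm_num : (0 : ℝ) < 3 / 2) (1 / 2)).mul_left
    (rexp (-u) ^ (7 / 8 + 2 * (i : ℝ)))
  have hgeom₂ := (hasSum_rpow_geometric ht0 ht1 (by norm_num : (0 : ℝ) < 9 / 2) (3 / 2)).mul_left
    (rexp (-u) ^ (25 / 8 + 6 * (i : ℝ)))
  obtain ⟨hsum, hle⟩ := summable_and_tsum_le_of_add_one_add_neg_add_one_le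
    (f := fun n : ℤ => gaussTerm u v w (i + 3 / 2) n) (fun n => gaussTerm_nonneg u v w _ _)
    ((hgeom₁.add hgeom₂).mul_left (rexp (-(u / 4)))) fun j => by
      push_cast
      exact gaussTerm_pair_le_of_sq_le hu.le hv.le hw i j
  refine ⟨hsum, hle.trans ?_⟩
  have hcentre := gaussTerm_zero_le (v := v) (w := w) hu.le i
  push_cast at hcentre ⊢
  nlinarith [Real.exp_pos (-(u / 4))]

lemma summable_gaussTerm_row (hk : 1 ≤ k) (hu : 0 < u) (hv : 0 < v) (hw : 4 * w ^ 2 ≤ u * v)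
    (hkw : k * |w| ≤ v) (i : ℕ) :
    Summable (fun n : ℤ => gaussTerm u v w (i + 1 / 2) n) := by
  cases i with
  | zero => simpa using (summable_and_tsum_gaussTerm_half_le (u := u) hk hv hkw).1
  | succ i =>
    rw [Nat.cast_succ, add_assoc, show (1 : ℝ) + 1 / 2 = 3 / 2 by norm_num]
    exact (summable_and_tsum_gaussTerm_le hu hv hw i).1

lemma summable_and_tsum_rows_le (hk : 1 ≤ k) (hu : 0 < u) (hv : 0 < v) (hw : 4 * w ^ 2 ≤ u * v)
    (hkw : k * |w| ≤ v) :
    Summable (fun i : ℕ => ∑' n : ℤ, gaussTerm u v w (i + 1 / 2) n) ∧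
      ∑' i : ℕ, ∑' n : ℤ, gaussTerm u v w (i + 1 / 2) n ≤
        rexp (-(u / 4)) * (1 + rho46 k (rexp (-u)) (rexp (-v))) := by
  have hhead := (summable_and_tsum_gaussTerm_half_le (u := u) hk hv hkw).2
  set s := rexp (-u)
  set t := rexp (-v)
  have hs0 : 0 < s := Real.exp_pos _
  have hs1 : s < 1 := Real.exp_lt_one_iff.2 (by linarith)
  have htail : ∀ i : ℕ, ∑' n : ℤ, gaussTerm u v w ((i + 1 : ℕ) + 1 / 2) n ≤
      rexp (-(u / 4)) * (s ^ (2 + 4 * (i : ℝ)) +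
        s ^ (7 / 8 + 2 * (i : ℝ)) * (t ^ (1 / 2 : ℝ) / (1 - t ^ (3 / 2 : ℝ))) +
        s ^ (25 / 8 + 6 * (i : ℝ)) * (t ^ (3 / 2 : ℝ) / (1 - t ^ (9 / 2 : ℝ)))) := by
    intro i
    rw [Nat.cast_succ, add_assoc, show (1 : ℝ) + 1 / 2 = 3 / 2 by norm_num]
    exact (summable_and_tsum_gaussTerm_le hu hv hw i).2
  have hgeom := (((hasSum_rpow_geometric hs0 hs1 (by norm_num : (0 : ℝ) < 4) 2).add
    ((hasSum_rpow_geometric hs0 hs1 (by norm_num : (0 : ℝ) < 2) (7 / 8)).mul_right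
      (t ^ (1 / 2 : ℝ) / (1 - t ^ (3 / 2 : ℝ))))).add
    ((hasSum_rpow_geometric hs0 hs1 (by norm_num : (0 : ℝ) < 6) (25 / 8)).mul_right
      (t ^ (3 / 2 : ℝ) / (1 - t ^ (9 / 2 : ℝ))))).mul_left (rexp (-(u / 4)))
  have htail_summable :
      Summable fun i : ℕ => ∑' n : ℤ, gaussTerm u v w ((i + 1 : ℕ) + 1 / 2) n :=
    hgeom.summable.of_nonneg_of_le (fun i => tsum_nonneg fun n => gaussTerm_nonneg u v w _ _)
      htail
  have hsummable := (summable_nat_add_iff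
    (f := fun i : ℕ => ∑' n : ℤ, gaussTerm u v w (i + 1 / 2) n) 1).1 htail_summable
  refine ⟨hsummable, ?_⟩
  rw [hsummable.tsum_eq_zero_add]
  have htail_le := hasSum_le htail htail_summable.hasSum hgeom
  simp only [Nat.cast_zero, zero_add] at hhead ⊢
  refine (add_le_add hhead htail_le).trans_eq ?_
  rw [rho46, div_mul_div_comm, div_mul_div_comm]
  ring

lemma summable_and_tsum_gaussTerm_lattice_le (hk : 1 ≤ k) (hu : 0 < u) (hv : 0 < v)
    (hw : 4 * w ^ 2 ≤ u * v) (hkw : k * |w| ≤ v) :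
    Summable (fun p : ℤ × ℤ => gaussTerm u v w (p.1 + 1 / 2) p.2) ∧
      ∑' p : ℤ × ℤ, gaussTerm u v w (p.1 + 1 / 2) p.2 ≤
        2 * rexp (-(u / 4)) * (1 + rho46 k (rexp (-u)) (rexp (-v))) := by
  obtain ⟨hrows, hrows_le⟩ := summable_and_tsum_rows_le hk hu hv hw hkw
  have hreflect : ∀ (i : ℕ) (n : ℤ), gaussTerm u v w (((-(i + 1) : ℤ) : ℝ) + 1 / 2) n =
      gaussTerm u v w (i + 1 / 2) ((-n : ℤ) : ℝ) := by
    intro i n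
    rw [Int.cast_neg n, ← gaussTerm_neg_left]
    congr 1
    push_cast
    ring
  have hrow : ∀ m : ℤ, Summable fun n : ℤ => gaussTerm u v w (m + 1 / 2) n := by
    intro m
    cases m with
    | ofNat i => simpa using summable_gaussTerm_row hk hu hv hw hkw i
    | negSucc i =>
      simp only [Int.negSucc_eq, hreflect]
      exact (summable_gaussTerm_row hk hu hv hw hkw i).comp_injective neg_injective
  have hrow_neg : ∀ i : ℕ, ∑' n : ℤ, gaussTerm u v w (((-(i + 1) : ℤ) : ℝ) + 1 / 2) n =
      ∑' n : ℤ, gaussTerm u v w (i + 1 / 2) n := by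
    intro i
    simp only [hreflect]
    exact (Equiv.neg ℤ).tsum_eq fun n => gaussTerm u v w (i + 1 / 2) n
  have hcols : HasSum (fun m : ℤ => ∑' n : ℤ, gaussTerm u v w (m + 1 / 2) n)
      (2 * ∑' i : ℕ, ∑' n : ℤ, gaussTerm u v w (i + 1 / 2) n) := by
    rw [two_mul]
    refine HasSum.of_nat_of_neg_add_one ?_ ?_
    · simpa using hrows.hasSum
    · simpa only [hrow_neg] using hrows.hasSum
  have hsum : Summable fun p : ℤ × ℤ => gaussTerm u v w (p.1 + 1 / 2) p.2 :=
    (summable_prod_of_nonneg fun p => gaussTerm_nonneg u v w _ _).2 ⟨hrow, hcols.summable⟩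
  refine ⟨hsum, ?_⟩
  rw [hsum.tsum_prod, hcols.tsum_eq, mul_assoc]
  gcongr

end GaussTermBounds

def thetaSummand (a b : Fin 2 → ℤ) (τ : Mat2) (m : Fin 2 → ℤ) : ℂ :=
  Complex.exp ((Real.pi : ℂ) * Complex.I *
    ((∑ i : Fin 2, ∑ j : Fin 2,
        ((m i : ℂ) + (a i : ℂ) / 2) * τ i j * ((m j : ℂ) + (a j : ℂ) / 2)) +
      ∑ i : Fin 2, ((m i : ℂ) + (a i : ℂ) / 2) * ((b i : ℂ) / 2)))

lemma theta_eq_tsum_prod (a b : Fin 2 → ℤ) (τ : Mat2) :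
    theta a b τ = ∑' p : ℤ × ℤ, thetaSummand a b τ ![p.1, p.2] :=
  ((finTwoArrowEquiv ℤ).symm.tsum_eq (thetaSummand a b τ)).symm

lemma norm_thetaSummand_one_zero {τ : Mat2} (hτ : τ 1 0 = τ 0 1) (β : ℤ) (p : ℤ × ℤ) :
    ‖thetaSummand ![1, 0] ![0, β] τ ![p.1, p.2]‖ =
      gaussTerm (π * y1 τ) (π * y2 τ) (π * y3 τ) (p.1 + 1 / 2) p.2 := by
  rw [thetaSummand, Complex.norm_exp, gaussTerm]
  congr 1
  simp only [Fin.sum_univ_two, Matrix.cons_val_zero, Matrix.cons_val_one, Matrix.cons_val_fin_one,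
    hτ, mul_re, mul_im, add_re, add_im, ofReal_re, ofReal_im, I_re, I_im, intCast_re, intCast_im,
    div_ofNat_re, div_ofNat_im, Int.cast_one, Int.cast_zero, one_re, one_im, zero_re, zero_im,
    y1, y2, y3, z1, z2, z3]
  ring

lemma thetaSummand_one_zero_of_eq_zero_or_eq_neg_one (τ : Mat2) (β : ℤ) {m : ℤ}
    (hm : m = 0 ∨ m = -1) :
    thetaSummand ![1, 0] ![0, β] τ ![m, 0] = Complex.exp (π * Complex.I * z1 τ / 4) := by
  rw [thetaSummand, z1]
  congr 1
  rcases hm with rfl | rfl <;>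
    simp only [Fin.sum_univ_two, Matrix.cons_val_zero, Matrix.cons_val_one, Matrix.cons_val_fin_one,
      Int.cast_zero, Int.cast_neg, Int.cast_one] <;>
    ring

theorem norm_theta_one_zero_div_xi46_sub_one_le {k : ℝ} (hk : 1 ≤ k) {τ : Mat2} (hτ : inH2 τ)
    (h1 : y3 τ ^ 2 ≤ 1 / 4 * y1 τ * y2 τ) (h2 : k * |y3 τ| ≤ y2 τ) (β : ℤ) :
    ‖theta ![1, 0] ![0, β] τ / xi46 τ - 1‖ ≤ rho46 k (q1 τ) (q2 τ) := by
  obtain ⟨hsymm, hpos⟩ := hτ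
  have hy1 : 0 < y1 τ := hpos.diag_pos (i := 0)
  have hy2 : 0 < y2 τ := hpos.diag_pos (i := 1)
  have hw : 4 * (π * y3 τ) ^ 2 ≤ (π * y1 τ) * (π * y2 τ) := by
    nlinarith [mul_le_mul_of_nonneg_left h1 (sq_nonneg π)]
  have hkw : k * |π * y3 τ| ≤ π * y2 τ := by
    rw [abs_mul, abs_of_pos Real.pi_pos]
    nlinarith [Real.pi_pos]
  obtain ⟨hF, hFle⟩ :=
    summable_and_tsum_gaussTerm_lattice_le hk (by positivity) (by positivity) hw hkw
  set T := fun p : ℤ × ℤ => thetaSummand ![1, 0] ![0, β] τ ![p.1, p.2]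
  have hnorm : ∀ p, ‖T p‖ = gaussTerm (π * y1 τ) (π * y2 τ) (π * y3 τ) (p.1 + 1 / 2) p.2 :=
    norm_thetaSummand_one_zero (hsymm.apply 0 1) β
  have hpair : ((0, 0) : ℤ × ℤ) ≠ (-1, 0) := by decide
  have hxi : xi46 τ = ∑ p ∈ {(0, 0), (-1, 0)}, T p := by
    simp only [Finset.sum_pair hpair, T]
    rw [xi46, thetaSummand_one_zero_of_eq_zero_or_eq_neg_one τ β (.inl rfl),
      thetaSummand_one_zero_of_eq_zero_or_eq_neg_one τ β (.inr rfl)]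
    ring
  have hleading :
      ∀ p ∈ ({(0, 0), (-1, 0)} : Finset (ℤ × ℤ)), ‖T p‖ = rexp (-(π * y1 τ / 4)) := by
    simp only [Finset.mem_insert, Finset.mem_singleton, forall_eq_or_imp, forall_eq, hnorm]
    constructor <;> (rw [gaussTerm]; congr 1; push_cast; ring)
  have hxi_norm : ‖xi46 τ‖ = 2 * rexp (-(π * y1 τ / 4)) := by
    rw [xi46, ← thetaSummand_one_zero_of_eq_zero_or_eq_neg_one τ β (.inl rfl), norm_mul,
      hleading (0, 0) (by simp)]
    norm_num
  have hdiff := norm_tsum_sub_sum_le (f := T) (by simpa only [hnorm] using hF) {(0, 0), (-1, 0)}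
  rw [← theta_eq_tsum_prod, ← hxi, Finset.sum_congr rfl hleading, Finset.sum_pair hpair] at hdiff
  have hxi_ne : xi46 τ ≠ 0 := mul_ne_zero two_ne_zero (Complex.exp_ne_zero _)
  rw [div_sub_one hxi_ne, norm_div, div_le_iff₀ (norm_pos_iff.2 hxi_ne), hxi_norm, q1, q2,
    neg_mul, neg_mul]
  simp only [hnorm] at hdiff
  linarith

/-- Estimate on θ₄ and θ₆. -/
theorem stmt_7 (k : ℝ) (hk : 1 ≤ k) (τ : Mat2) (hτ : inH2 τ)
    (h1 : y3 τ ^ 2 ≤ 1/4 * y1 τ * y2 τ) (h2 : k * |y3 τ| ≤ y2 τ) :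
    ∀ j ∈ ({4, 6} : Set ℕ),
      ‖thetaIdx j τ / xi46 τ - 1‖ ≤ rho46 k (q1 τ) (q2 τ) := by
  rintro j (rfl | rfl)
  · simpa [thetaIdx] using norm_theta_one_zero_div_xi46_sub_one_le hk hτ h1 h2 0
  · simpa [thetaIdx] using norm_theta_one_zero_div_xi46_sub_one_le hk hτ h1 h2 1
end
end

section
/- Let τ ∈ ℋ₂ satisfy y₃(τ)² ≤ (1/4)·y₁(τ)·y₂(τ). Then |θ₀(τ) − ξ₀(τ)| ≤ ρ₀(q₁(τ),q₂(τ)); for j ∈ {0,2}, |θ_j(τ) − ξ_{0,2}(τ)| ≤ ρ₀(q₁(τ),q₂(τ)) + 2q₂(τ); for j ∈ {0,1}, |θ_j(τ) − ξ_{0,1}(τ)| ≤ ρ₀(q₁(τ),q₂(τ)) + 2q₁(τ); and for all 0 ≤ j ≤ 3, |θ_j(τ) − 1| ≤ ρ₀(q₁(τ),q₂(τ)) + 2q₁(τ) + 2q₂(τ). -/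
open Complex

noncomputable section

/-!
For `a = 0` the theta series is `∑_{m ∈ ℤ²} exp(iπ(mᵀτm + mᵀb/2))`, and its `m`-th term has
modulus `exp(-π Q(m))` with `Q(m) = m₁²y₁ + 2m₁m₂y₃ + m₂²y₂`. The terms `m = 0, ±e₁, ±e₂` sum to
`1 + P₁ + P₂`, where the pair `P_i` (from `±e_i`) has modulus at most `2q_i` and equals
`2exp(iπz_i)` when `b_i = 0`; so all four estimates follow once the sum of `exp(-π Q(m))` over
the remaining `m` is bounded by `ρ₀`.

On the axes this is a one-dimensional Gaussian tail, dominated by a geometric series because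
`k² ≥ 4 + 5(|k| - 2)` for `|k| ≥ 2`. Off the axes, `y₃² ≤ y₁y₂/4` gives `|2m₁m₂y₃| ≤ S/2` for
`S = m₁²y₁ + m₂²y₂`, so by monotonicity of `cosh` the terms at `m` and `(m₁, -m₂)` together are at
most `exp(-πS/2) + exp(-3πS/2)`. Both of these factor into one-dimensional sums over `k ≠ 0`,
dominated by geometric series because `k² ≥ 1 + 3(|k| - 1)`.
-/

open scoped Real

theorem summable_exp_neg_mul_int_sq {c : ℝ} (hc : 0 < c) :
    Summable fun k : ℤ => rexp (-c * k ^ 2) := by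
  have hnat : Summable fun n : ℕ => rexp (-c * n ^ 2) := by
    refine .of_nonneg_of_le (fun n => (Real.exp_pos _).le) (fun n => ?_)
      (summable_geometric_of_lt_one (Real.exp_pos (-c)).le (Real.exp_lt_one_iff.mpr (by linarith)))
    rw [← Real.exp_nat_mul, Real.exp_le_exp]
    have : (n : ℝ) ≤ n ^ 2 := by exact_mod_cast Nat.le_self_pow two_ne_zero n
    nlinarith
  exact .of_nat_of_neg (by simpa using hnat) (by simpa using hnat)

/-- Since `k² ≥ n² + (2n + 1) d` when `|k| = n + d`, the sum of `exp(-c k²)` over `|k| ≥ n` is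
dominated by two geometric series of ratio `exp(-c (2n + 1))`, one for each sign of `k`. -/
def gaussTailBound (n : ℕ) (c : ℝ) : ℝ :=
  2 * rexp (-c * n ^ 2) / (1 - rexp (-c * (2 * n + 1)))

theorem tsum_exp_neg_mul_int_sq_le {c : ℝ} (hc : 0 < c) (n : ℕ) :
    ∑' k : {k : ℤ | n ≤ k.natAbs}, rexp (-c * (k : ℤ) ^ 2) ≤ gaussTailBound n c := by
  set ρ := rexp (-c * (2 * n + 1))
  have hρ : ρ < 1 := Real.exp_lt_one_iff.mpr (by nlinarith)
  set g : Bool × ℕ → ℝ := fun p => rexp (-c * n ^ 2) * ρ ^ p.2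
  have hg : HasSum g (gaussTailBound n c) := by
    have hgeom := hasSum_geometric_of_lt_one (Real.exp_pos _).le hρ
    have hbool : HasSum (fun _ : Bool => rexp (-c * n ^ 2)) (2 * rexp (-c * n ^ 2)) := by
      convert hasSum_fintype fun _ : Bool => rexp (-c * n ^ 2) using 1
      simp [two_mul]
    rw [gaussTailBound, div_eq_mul_inv]
    exact hbool.mul hgeom (Summable.of_finite.mul_of_nonneg hgeom.summable
      (fun _ => (Real.exp_pos _).le) fun _ => by positivity)
  set i : {k : ℤ | n ≤ k.natAbs} → Bool × ℕ := fun k => (decide ((k : ℤ) < 0), (k : ℤ).natAbs - n)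
  have hi : Function.Injective i := by
    rintro ⟨k, hk : n ≤ k.natAbs⟩ ⟨l, hl : n ≤ l.natAbs⟩ hkl
    simp only [i, Prod.mk.injEq, decide_eq_decide] at hkl
    refine Subtype.ext ?_
    dsimp only at hkl ⊢
    omega
  have hle (k : {k : ℤ | n ≤ k.natAbs}) : rexp (-c * (k : ℤ) ^ 2) ≤ g (i k) := by
    obtain ⟨k, hk : n ≤ k.natAbs⟩ := k
    obtain ⟨d, hd⟩ := Nat.exists_eq_add_of_le hk
    have hk2 : (k : ℝ) ^ 2 = ((n + d : ℕ) : ℝ) ^ 2 := by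
      rw [← hd, Nat.cast_natAbs, Int.cast_abs, sq_abs]
    have hd2 : (d : ℝ) ≤ d ^ 2 := by exact_mod_cast Nat.le_self_pow two_ne_zero d
    simp only [g, i, hd, Nat.add_sub_cancel_left, ρ, ← Real.exp_nat_mul, ← Real.exp_add,
      Real.exp_le_exp, hk2]
    push_cast
    nlinarith [mul_le_mul_of_nonneg_left hd2 hc.le]
  calc ∑' k : {k : ℤ | n ≤ k.natAbs}, rexp (-c * (k : ℤ) ^ 2)
      ≤ ∑' k, g (i k) :=
        Summable.tsum_le_tsum hle ((summable_exp_neg_mul_int_sq hc).subtype _)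
          (hg.summable.comp_injective hi)
    _ ≤ ∑' p, g p := tsum_comp_le_tsum_of_inj hg.summable (fun p => by positivity) hi
    _ = gaussTailBound n c := hg.tsum_eq

theorem hasSum_set_prod_mul {α β : Type*} {f : α → ℝ} {g : β → ℝ} {s : Set α} {t : Set β}
    (hf : Summable fun a : s => f a) (hg : Summable fun b : t => g b)
    (hf₀ : ∀ a, 0 ≤ f a) (hg₀ : ∀ b, 0 ≤ g b) :
    HasSum (fun m : ↥(s ×ˢ t) => f m.1.1 * g m.1.2) ((∑' a : s, f a) * ∑' b : t, g b) := by
  have hfg := hf.mul_of_nonneg hg (fun a => hf₀ a) fun b => hg₀ b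
  rw [hf.tsum_mul_tsum hg hfg]
  exact (Equiv.Set.prod s t).hasSum_iff.mpr hfg.hasSum

theorem exists_hasSum_exp_neg_mul_sq_set_prod_le {c₁ c₂ : ℝ} (hc₁ : 0 < c₁) (hc₂ : 0 < c₂)
    (n₁ n₂ : ℕ) : ∃ P ≤ gaussTailBound n₁ c₁ * gaussTailBound n₂ c₂,
      HasSum (fun m : ↥({k : ℤ | n₁ ≤ k.natAbs} ×ˢ {k : ℤ | n₂ ≤ k.natAbs}) =>
        rexp (-c₁ * (m.1.1 : ℝ) ^ 2) * rexp (-c₂ * (m.1.2 : ℝ) ^ 2)) P := by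
  have h₁ := tsum_exp_neg_mul_int_sq_le hc₁ n₁
  have h₂ := tsum_exp_neg_mul_int_sq_le hc₂ n₂
  have h₀ : 0 ≤ ∑' k : {k : ℤ | n₂ ≤ k.natAbs}, rexp (-c₂ * (k : ℤ) ^ 2) :=
    tsum_nonneg fun _ => (Real.exp_pos _).le
  refine ⟨_, mul_le_mul h₁ h₂ h₀ ((tsum_nonneg fun _ => (Real.exp_pos _).le).trans h₁),
    hasSum_set_prod_mul (f := fun k : ℤ => rexp (-c₁ * k ^ 2))
      (g := fun k : ℤ => rexp (-c₂ * k ^ 2))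
      ((summable_exp_neg_mul_int_sq hc₁).subtype _) ((summable_exp_neg_mul_int_sq hc₂).subtype _)
      (fun _ => (Real.exp_pos _).le) fun _ => (Real.exp_pos _).le⟩

theorem Real.exp_neg_add_add_exp_neg_sub_le {S c : ℝ} (hc : |c| ≤ S / 2) :
    rexp (-(S + c)) + rexp (-(S - c)) ≤ rexp (-(S / 2)) + rexp (-(3 * S / 2)) := by
  have hcosh (x : ℝ) : rexp (-(S + x)) + rexp (-(S - x)) = 2 * rexp (-S) * Real.cosh x := by
    rw [Real.cosh_eq, show -(S + x) = -S + -x by ring, show -(S - x) = -S + x by ring,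
      Real.exp_add, Real.exp_add]
    ring
  calc rexp (-(S + c)) + rexp (-(S - c)) = 2 * rexp (-S) * Real.cosh c := hcosh c
    _ ≤ 2 * rexp (-S) * Real.cosh (S / 2) := by
      gcongr
      exact Real.cosh_le_cosh.mpr (hc.trans (le_abs_self _))
    _ = rexp (-(S / 2)) + rexp (-(3 * S / 2)) := by
      rw [← hcosh, add_comm]
      ring_nf

theorem norm_sub_le_of_norm_sub_add_le {E : Type*} [SeminormedAddCommGroup E] {x y d : E}
    {a c : ℝ} (h : ‖x - (y + d)‖ ≤ a) (hd : ‖d‖ ≤ c) : ‖x - y‖ ≤ a + c :=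
  (norm_sub_le_norm_sub_add_norm_sub x (y + d) y).trans (add_le_add h (by simpa using hd))

namespace SiegelTheta

def thetaWeight (y₁ y₂ y₃ : ℝ) (m : ℤ × ℤ) : ℝ :=
  rexp (-π * (m.1 ^ 2 * y₁ + 2 * m.1 * m.2 * y₃ + m.2 ^ 2 * y₂))

section Weight

variable {y₁ y₂ y₃ : ℝ}

theorem abs_cross_term_le (hy₁ : 0 ≤ y₁) (hy₂ : 0 ≤ y₂) (h : y₃ ^ 2 ≤ 1/4 * y₁ * y₂) (a b : ℝ) :
    |2 * a * b * y₃| ≤ (a ^ 2 * y₁ + b ^ 2 * y₂) / 2 := by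
  refine abs_le_of_sq_le_sq ?_ (by positivity)
  nlinarith [mul_le_mul_of_nonneg_left h (sq_nonneg (a * b)), sq_nonneg (a ^ 2 * y₁ - b ^ 2 * y₂)]

theorem thetaWeight_le (hy₁ : 0 ≤ y₁) (hy₂ : 0 ≤ y₂) (h : y₃ ^ 2 ≤ 1/4 * y₁ * y₂) (m : ℤ × ℤ) :
    thetaWeight y₁ y₂ y₃ m ≤ rexp (-(π * y₁ / 2) * m.1 ^ 2) * rexp (-(π * y₂ / 2) * m.2 ^ 2) := by
  rw [thetaWeight, ← Real.exp_add, Real.exp_le_exp]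
  have := neg_abs_le (2 * (m.1 : ℝ) * m.2 * y₃)
  nlinarith [abs_cross_term_le hy₁ hy₂ h m.1 m.2, Real.pi_pos]

theorem summable_thetaWeight (hy₁ : 0 < y₁) (hy₂ : 0 < y₂) (h : y₃ ^ 2 ≤ 1/4 * y₁ * y₂) :
    Summable (thetaWeight y₁ y₂ y₃) :=
  .of_nonneg_of_le (fun _ => (Real.exp_pos _).le) (thetaWeight_le hy₁.le hy₂.le h)
    ((summable_exp_neg_mul_int_sq (by positivity)).mul_of_nonneg
      (summable_exp_neg_mul_int_sq (by positivity)) (fun _ => (Real.exp_pos _).le)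
      fun _ => (Real.exp_pos _).le)

theorem thetaWeight_eq_mul_of_mul_eq_zero {m : ℤ × ℤ} (hm : m.1 * m.2 = 0) :
    thetaWeight y₁ y₂ y₃ m = rexp (-(π * y₁) * m.1 ^ 2) * rexp (-(π * y₂) * m.2 ^ 2) := by
  have hm' : (m.1 : ℝ) * m.2 = 0 := by exact_mod_cast hm
  rw [thetaWeight, ← Real.exp_add]
  congr 1
  linear_combination (-2 * π * y₃) * hm'

theorem thetaWeight_add_thetaWeight_neg_snd_le (hy₁ : 0 ≤ y₁) (hy₂ : 0 ≤ y₂)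
    (h : y₃ ^ 2 ≤ 1/4 * y₁ * y₂) (m : ℤ × ℤ) :
    thetaWeight y₁ y₂ y₃ m + thetaWeight y₁ y₂ y₃ (m.1, -m.2) ≤
      rexp (-(π * y₁ / 2) * m.1 ^ 2) * rexp (-(π * y₂ / 2) * m.2 ^ 2) +
        rexp (-(3 * π * y₁ / 2) * m.1 ^ 2) * rexp (-(3 * π * y₂ / 2) * m.2 ^ 2) := by
  set S := π * (m.1 ^ 2 * y₁ + m.2 ^ 2 * y₂)
  set c := π * (2 * m.1 * m.2 * y₃)
  have hc : |c| ≤ S / 2 := by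
    rw [abs_mul, abs_of_pos Real.pi_pos, mul_div_assoc]
    exact mul_le_mul_of_nonneg_left (abs_cross_term_le hy₁ hy₂ h _ _) Real.pi_pos.le
  convert Real.exp_neg_add_add_exp_neg_sub_le hc using 2 <;>
    simp only [thetaWeight, ← Real.exp_add, S, c] <;> push_cast <;> ring_nf

theorem tsum_thetaWeight_set_prod_of_mul_eq_zero (hy₁ : 0 < y₁) (hy₂ : 0 < y₂) {s t : Set ℤ}
    (hst : ∀ a ∈ s, ∀ b ∈ t, a * b = 0) :
    ∑' m : ↥(s ×ˢ t), thetaWeight y₁ y₂ y₃ m =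
      (∑' a : s, rexp (-(π * y₁) * (a : ℤ) ^ 2)) * ∑' b : t, rexp (-(π * y₂) * (b : ℤ) ^ 2) := by
  refine (tsum_congr fun m => thetaWeight_eq_mul_of_mul_eq_zero (hst _ m.2.1 _ m.2.2)).trans ?_
  exact (hasSum_set_prod_mul (f := fun k : ℤ => rexp (-(π * y₁) * k ^ 2))
    (g := fun k : ℤ => rexp (-(π * y₂) * k ^ 2))
    ((summable_exp_neg_mul_int_sq (by positivity)).subtype s)
    ((summable_exp_neg_mul_int_sq (by positivity)).subtype t) (fun _ => (Real.exp_pos _).le)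
    fun _ => (Real.exp_pos _).le).tsum_eq

theorem tsum_thetaWeight_offAxis_le (hy₁ : 0 < y₁) (hy₂ : 0 < y₂) (h : y₃ ^ 2 ≤ 1/4 * y₁ * y₂) :
    ∑' m : ↥({k : ℤ | 1 ≤ k.natAbs} ×ˢ {k : ℤ | 1 ≤ k.natAbs}), thetaWeight y₁ y₂ y₃ m ≤
      (gaussTailBound 1 (π * y₁ / 2) * gaussTailBound 1 (π * y₂ / 2) +
        gaussTailBound 1 (3 * π * y₁ / 2) * gaussTailBound 1 (3 * π * y₂ / 2)) / 2 := by
  set C := {k : ℤ | 1 ≤ k.natAbs} ×ˢ {k : ℤ | 1 ≤ k.natAbs}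
  let σ : C → C := fun m => ⟨(m.1.1, -m.1.2), m.2.1, by simpa using m.2.2⟩
  have hσ : Function.Involutive σ := fun m => by simp [σ]
  have hw := (summable_thetaWeight hy₁ hy₂ h).subtype C
  have hsym : HasSum (fun m : C => thetaWeight y₁ y₂ y₃ m + thetaWeight y₁ y₂ y₃ (m.1.1, -m.1.2))
      (∑' m : C, thetaWeight y₁ y₂ y₃ m + ∑' m : C, thetaWeight y₁ y₂ y₃ m) :=
    hw.hasSum.add (hσ.toPerm.hasSum_iff.mpr hw.hasSum)
  obtain ⟨P₁, hP₁, h₁⟩ := exists_hasSum_exp_neg_mul_sq_set_prod_le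
    (c₁ := π * y₁ / 2) (c₂ := π * y₂ / 2) (by positivity) (by positivity) 1 1
  obtain ⟨P₂, hP₂, h₂⟩ := exists_hasSum_exp_neg_mul_sq_set_prod_le
    (c₁ := 3 * π * y₁ / 2) (c₂ := 3 * π * y₂ / 2) (by positivity) (by positivity) 1 1
  have := hasSum_le (fun m => ?_) hsym (h₁.add h₂)
  · linarith
  · exact thetaWeight_add_thetaWeight_neg_snd_le hy₁.le hy₂.le h m.1

end Weight

def fivePoints : Finset (ℤ × ℤ) := {(0, 0), (1, 0), (-1, 0), (0, 1), (0, -1)}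

theorem compl_fivePoints :
    ((fivePoints : Set (ℤ × ℤ))ᶜ) = {k : ℤ | 2 ≤ k.natAbs} ×ˢ {0} ∪
      ({0} ×ˢ {k : ℤ | 2 ≤ k.natAbs} ∪ {k : ℤ | 1 ≤ k.natAbs} ×ˢ {k : ℤ | 1 ≤ k.natAbs}) := by
  ext ⟨a, b⟩
  simp only [fivePoints, Finset.coe_insert, Finset.coe_singleton, Set.mem_compl_iff,
    Set.mem_insert_iff, Set.mem_singleton_iff, Prod.mk.injEq, Set.mem_union, Set.mem_prod,
    Set.mem_ofPred_eq]
  omega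

theorem rho0_exp_eq (y₁ y₂ : ℝ) : rho0 (rexp (-π * y₁)) (rexp (-π * y₂)) =
    gaussTailBound 2 (π * y₁) + (gaussTailBound 2 (π * y₂) +
      (gaussTailBound 1 (π * y₁ / 2) * gaussTailBound 1 (π * y₂ / 2) +
        gaussTailBound 1 (3 * π * y₁ / 2) * gaussTailBound 1 (3 * π * y₂ / 2)) / 2) := by
  simp only [rho0, gaussTailBound, div_mul_div_comm, ← Real.exp_mul]
  ring_nf

theorem tsum_compl_fivePoints_thetaWeight_le {y₁ y₂ y₃ : ℝ} (hy₁ : 0 < y₁) (hy₂ : 0 < y₂)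
    (h : y₃ ^ 2 ≤ 1/4 * y₁ * y₂) :
    ∑' m : ↥((fivePoints : Set (ℤ × ℤ))ᶜ), thetaWeight y₁ y₂ y₃ m ≤
      rho0 (rexp (-π * y₁)) (rexp (-π * y₂)) := by
  have hw := summable_thetaWeight hy₁ hy₂ h
  rw [compl_fivePoints, Summable.tsum_union_disjoint (by simp [Set.disjoint_left])
      (hw.subtype _) (hw.subtype _),
    Summable.tsum_union_disjoint
      (Set.disjoint_prod.mpr (.inl (Set.disjoint_singleton_left.mpr (by simp))))
      (hw.subtype _) (hw.subtype _),
    tsum_thetaWeight_set_prod_of_mul_eq_zero hy₁ hy₂ (by simp),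
    tsum_thetaWeight_set_prod_of_mul_eq_zero hy₁ hy₂ (by simp), rho0_exp_eq,
    tsum_singleton (0 : ℤ) fun b : ℤ => rexp (-(π * y₂) * (b : ℝ) ^ 2),
    tsum_singleton (0 : ℤ) fun a : ℤ => rexp (-(π * y₁) * (a : ℝ) ^ 2)]
  simp only [Int.cast_zero, zero_pow two_ne_zero, mul_zero, Real.exp_zero, mul_one, one_mul]
  exact add_le_add (tsum_exp_neg_mul_int_sq_le (by positivity) 2)
    (add_le_add (tsum_exp_neg_mul_int_sq_le (by positivity) 2)
      (tsum_thetaWeight_offAxis_le hy₁ hy₂ h))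

def thetaTerm (b : Fin 2 → ℤ) (τ : Mat2) (m : ℤ × ℤ) : ℂ :=
  cexp (π * I * (m.1 ^ 2 * z1 τ + 2 * m.1 * m.2 * z3 τ + m.2 ^ 2 * z2 τ +
    (m.1 * b 0 + m.2 * b 1) / 2))

def thetaPair (b : Fin 2 → ℤ) (τ : Mat2) (e : ℤ × ℤ) : ℂ :=
  thetaTerm b τ e + thetaTerm b τ (-e)

section Theta

variable {τ : Mat2}

theorem y1_pos (hτ : inH2 τ) : 0 < y1 τ := by
  simpa [y1, z1] using hτ.2.diag_pos (i := 0)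

theorem y2_pos (hτ : inH2 τ) : 0 < y2 τ := by
  simpa [y2, z2] using hτ.2.diag_pos (i := 1)

theorem theta_zero_eq_tsum_thetaTerm (b : Fin 2 → ℤ) (hτ : τ.IsSymm) :
    theta ![0, 0] b τ = ∑' m : ℤ × ℤ, thetaTerm b τ m := by
  rw [theta, ← (finTwoArrowEquiv ℤ).symm.tsum_eq]
  refine tsum_congr fun m => ?_
  simp only [thetaTerm, z1, z2, z3, Fin.sum_univ_two, hτ.apply 0 1, finTwoArrowEquiv_symm_apply,
    Matrix.cons_val_zero, Matrix.cons_val_one, Matrix.cons_val_fin_one, Int.cast_zero, zero_div,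
    add_zero]
  ring_nf

theorem norm_thetaTerm (b : Fin 2 → ℤ) (τ : Mat2) (m : ℤ × ℤ) :
    ‖thetaTerm b τ m‖ = thetaWeight (y1 τ) (y2 τ) (y3 τ) m := by
  rw [thetaTerm, Complex.norm_exp, thetaWeight]
  congr 1
  simp [y1, y2, y3, sq]

theorem summable_thetaTerm (b : Fin 2 → ℤ) (hτ : inH2 τ) (h : y3 τ ^ 2 ≤ 1/4 * y1 τ * y2 τ) :
    Summable (thetaTerm b τ) :=
  .of_norm (by simpa only [norm_thetaTerm] using summable_thetaWeight (y1_pos hτ) (y2_pos hτ) h)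

theorem norm_theta_sub_sum_fivePoints_le (b : Fin 2 → ℤ) (hτ : inH2 τ)
    (h : y3 τ ^ 2 ≤ 1/4 * y1 τ * y2 τ) :
    ‖theta ![0, 0] b τ - ∑ m ∈ fivePoints, thetaTerm b τ m‖ ≤ rho0 (q1 τ) (q2 τ) := by
  have hs := summable_thetaTerm b hτ h
  rw [theta_zero_eq_tsum_thetaTerm b hτ.1, ← hs.sum_add_tsum_compl (s := fivePoints),
    add_sub_cancel_left]
  calc ‖∑' m : ↥((fivePoints : Set (ℤ × ℤ))ᶜ), thetaTerm b τ m‖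
      ≤ ∑' m : ↥((fivePoints : Set (ℤ × ℤ))ᶜ), thetaWeight (y1 τ) (y2 τ) (y3 τ) m := by
        simpa only [norm_thetaTerm] using norm_tsum_le_tsum_norm (hs.norm.subtype _)
    _ ≤ rho0 (q1 τ) (q2 τ) := tsum_compl_fivePoints_thetaWeight_le (y1_pos hτ) (y2_pos hτ) h

theorem sum_fivePoints_thetaTerm (b : Fin 2 → ℤ) (τ : Mat2) :
    ∑ m ∈ fivePoints, thetaTerm b τ m = 1 + thetaPair b τ (1, 0) + thetaPair b τ (0, 1) := by
  simp [fivePoints, thetaPair, thetaTerm, add_assoc]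

theorem norm_thetaPair_le (b : Fin 2 → ℤ) (τ : Mat2) (e : ℤ × ℤ) :
    ‖thetaPair b τ e‖ ≤ 2 * thetaWeight (y1 τ) (y2 τ) (y3 τ) e := by
  refine (norm_add_le _ _).trans_eq ?_
  rw [norm_thetaTerm, norm_thetaTerm, two_mul]
  simp [thetaWeight]

theorem thetaPair_one_zero (b : Fin 2 → ℤ) (τ : Mat2) (hb : b 0 = 0) :
    thetaPair b τ (1, 0) = 2 * cexp (π * I * z1 τ) := by
  simp [thetaPair, thetaTerm, hb, two_mul]

theorem thetaPair_zero_one (b : Fin 2 → ℤ) (τ : Mat2) (hb : b 1 = 0) :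
    thetaPair b τ (0, 1) = 2 * cexp (π * I * z2 τ) := by
  simp [thetaPair, thetaTerm, hb, two_mul]

end Theta

theorem thetaIdx_eq_theta_of_le_three {j : ℕ} (hj : j ≤ 3) (τ : Mat2) :
    thetaIdx j τ = theta ![0, 0] ![((j % 2 : ℕ) : ℤ), ((j / 2 % 2 : ℕ) : ℤ)] τ := by
  interval_cases j <;> rfl

end SiegelTheta

open SiegelTheta

/-- Estimates on θ₀, θ₁, θ₂, θ₃. -/
theorem stmt_9 (τ : Mat2) (hτ : inH2 τ) (h : y3 τ ^ 2 ≤ 1/4 * y1 τ * y2 τ) :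
    ‖thetaIdx 0 τ - xi0 τ‖ ≤ rho0 (q1 τ) (q2 τ) ∧
    (∀ j ∈ ({0, 2} : Set ℕ),
      ‖thetaIdx j τ - xi02 τ‖ ≤ rho0 (q1 τ) (q2 τ) + 2 * q2 τ) ∧
    (∀ j ∈ ({0, 1} : Set ℕ),
      ‖thetaIdx j τ - xi01 τ‖ ≤ rho0 (q1 τ) (q2 τ) + 2 * q1 τ) ∧
    (∀ j ≤ 3,
      ‖thetaIdx j τ - 1‖ ≤ rho0 (q1 τ) (q2 τ) + 2 * q1 τ + 2 * q2 τ) := by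
  set b : ℕ → Fin 2 → ℤ := fun j => ![((j % 2 : ℕ) : ℤ), ((j / 2 % 2 : ℕ) : ℤ)]
  have hθ : ∀ j ≤ 3, ‖thetaIdx j τ - (1 + thetaPair (b j) τ (1, 0) + thetaPair (b j) τ (0, 1))‖
      ≤ rho0 (q1 τ) (q2 τ) := fun j hj => by
    rw [thetaIdx_eq_theta_of_le_three hj, ← sum_fivePoints_thetaTerm]
    exact norm_theta_sub_sum_fivePoints_le _ hτ h
  have hu (j : ℕ) : ‖thetaPair (b j) τ (1, 0)‖ ≤ 2 * q1 τ := by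
    simpa [thetaWeight, q1] using norm_thetaPair_le (b j) τ (1, 0)
  have hv (j : ℕ) : ‖thetaPair (b j) τ (0, 1)‖ ≤ 2 * q2 τ := by
    simpa [thetaWeight, q2] using norm_thetaPair_le (b j) τ (0, 1)
  have hu₀ (j : ℕ) (hj : j % 2 = 0) : thetaPair (b j) τ (1, 0) = 2 * cexp (π * I * z1 τ) :=
    thetaPair_one_zero _ _ (by simp only [b, Matrix.cons_val_zero, hj, Nat.cast_zero])
  have hv₀ (j : ℕ) (hj : j / 2 % 2 = 0) : thetaPair (b j) τ (0, 1) = 2 * cexp (π * I * z2 τ) :=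
    thetaPair_zero_one _ _
      (by simp only [b, Matrix.cons_val_one, Matrix.cons_val_zero, hj, Nat.cast_zero])
  refine ⟨?_, fun j hj => ?_, fun j hj => ?_, fun j hj => ?_⟩
  · simpa [hu₀ 0 rfl, hv₀ 0 rfl, xi0] using hθ 0 (by norm_num)
  · obtain ⟨hj2, hj3⟩ : j % 2 = 0 ∧ j ≤ 3 := by rcases hj with rfl | rfl <;> decide
    refine norm_sub_le_of_norm_sub_add_le ?_ (hv j)
    simpa [xi02, hu₀ j hj2] using hθ j hj3
  · obtain ⟨hj2, hj3⟩ : j / 2 % 2 = 0 ∧ j ≤ 3 := by rcases hj with rfl | rfl <;> decide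
    refine norm_sub_le_of_norm_sub_add_le ?_ (hu j)
    simpa [xi01, hv₀ j hj2, add_right_comm] using hθ j hj3
  · rw [add_assoc]
    refine norm_sub_le_of_norm_sub_add_le ?_ ((norm_add_le _ _).trans (add_le_add (hu j) (hv j)))
    simpa [add_assoc] using hθ j hj
end
end

section
/- Let τ ∈ ℋ₂. (1) If r(τ) ≥ 0.4, then the theta constants θ_j(τ) for 0 ≤ j ≤ 3 are in good position. (2) If λ₁(τ) ≥ 0.6, then the theta constants θ_j(τ) for 0 ≤ j ≤ 3 are in good position. -/
open Complex

noncomputable section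

/-! With characteristic `a = 0` the theta series is `1 + ∑_{m ≠ 0} e^{πi(mᵀτm + mᵀb/2)}`, and the
`m`-th term has modulus `e^{-π mᵀ (Im τ) m}`. Bounding `mᵀ (Im τ) m` below by `y₁ m₀²` or `y₂ m₁²`
on the coordinate axes and by `λ₁ |m|²` off them, and using `n² ≥ 3|n| - 2`, the tail is at most
`4 ρ(e^{-πα}) + 4 ρ(e^{-πβ})²` with `ρ(x) = x / (1 - x³)`, whenever `α ≤ y₁, y₂` and `β ≤ λ₁`.
For `(α, β) = (0.8, 0.4)` and `(0.6, 0.6)` this is below `1/√2`, and the disc of radius `1/√2`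
about `1` lies in the sector `|arg z| < π/4`, which `e^{iπ/4}` rotates into the open first
quadrant. -/

open Real

lemma goodPosition_of_norm_sub_one_le {S : Set ℂ} {e : ℝ} (he : e ^ 2 < 1 / 2)
    (hS : ∀ z ∈ S, ‖z - 1‖ ≤ e) : GoodPosition S := by
  set s : ℝ := √2 / 2
  have hs0 : 0 < s := by positivity
  have hss : s * s = 1 / 2 := by
    rw [div_mul_div_comm, Real.mul_self_sqrt zero_le_two]; norm_num
  refine ⟨s * (1 + Complex.I), ?_, fun z hz => ?_⟩
  · rw [Complex.norm_def, Complex.normSq_apply]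
    norm_num [hss]
  · have hdist : (z.re - 1) ^ 2 + z.im ^ 2 < 1 / 2 := by
      have h := hS z hz
      have hsq : ‖z - 1‖ ^ 2 = (z.re - 1) ^ 2 + z.im ^ 2 := by
        rw [Complex.sq_norm, Complex.normSq_apply]; simp; ring
      nlinarith [norm_nonneg (z - 1)]
    have hre : |z.im| < z.re := by
      cases abs_cases z.im <;> nlinarith [sq_nonneg (z.re - 1 / 2)]
    simp only [Complex.mul_re, Complex.mul_im, Complex.ofReal_re, Complex.ofReal_im,
      Complex.add_re, Complex.add_im, Complex.one_re, Complex.one_im, Complex.I_re, Complex.I_im]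
    constructor <;> nlinarith [le_abs_self z.im, neg_abs_le z.im]

lemma norm_tsum_sub_le {ι E : Type*} [NormedAddCommGroup E] [CompleteSpace E] [DecidableEq ι]
    {f : ι → E} {M : ι → ℝ} {s : ℝ} (hM : HasSum M s) (i₀ : ι) (hM₀ : 0 ≤ M i₀)
    (hfM : ∀ i ≠ i₀, ‖f i‖ ≤ M i) : ‖∑' i, f i - f i₀‖ ≤ s := by
  set g := Function.update f i₀ 0
  have hgM : ∀ i, ‖g i‖ ≤ M i := by
    intro i
    by_cases hi : i = i₀
    · simpa [g, hi] using hM₀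
    · simpa [g, hi] using hfM i hi
  have hf : HasSum f (f i₀ + ∑' i, g i) := by
    simpa [g] using (hM.summable.of_norm_bounded hgM).hasSum.update i₀ (f i₀)
  rw [hf.tsum_eq, add_sub_cancel_left]
  exact tsum_of_norm_bounded hM hgM

lemma hasSum_fin_two_mul {ι : Type*} {f g : ι → ℝ} {a b : ℝ} (hf : HasSum f a) (hg : HasSum g b)
    (hf0 : 0 ≤ f) (hg0 : 0 ≤ g) : HasSum (fun m : Fin 2 → ι => f (m 0) * g (m 1)) (a * b) :=
  (finTwoArrowEquiv ι).hasSum_iff.mpr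
    (hf.mul hg (hf.summable.mul_of_nonneg hg.summable hf0 hg0))

def tailBound (x : ℝ) : ℝ := x / (1 - x ^ 3)

def cubeMajorant (x : ℝ) (n : ℤ) : ℝ := if n = 0 then 0 else x * (x ^ 3) ^ (n.natAbs - 1)

lemma cubeMajorant_zero (x : ℝ) : cubeMajorant x 0 = 0 := if_pos rfl

lemma cubeMajorant_nonneg {x : ℝ} (hx : 0 ≤ x) : 0 ≤ cubeMajorant x := fun n => by
  unfold cubeMajorant; split <;> positivity

lemma hasSum_cubeMajorant {x : ℝ} (h0 : 0 ≤ x) (h1 : x < 1) :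
    HasSum (cubeMajorant x) (2 * tailBound x) := by
  have hgeom : HasSum (fun n : ℕ => x * (x ^ 3) ^ n) (tailBound x) :=
    (hasSum_geometric_of_lt_one (by positivity) (pow_lt_one₀ h0 h1 three_ne_zero)).mul_left x
  have hpos : HasSum (fun n : ℕ => cubeMajorant x n) (tailBound x) := by
    simpa [cubeMajorant] using hgeom.zero_add (f := fun n : ℕ => cubeMajorant x n)
  have hneg : HasSum (fun n : ℕ => cubeMajorant x (-(n + 1))) (tailBound x) := by
    convert hgeom using 2 with n
    rw [cubeMajorant, if_neg (by omega), show (-((n : ℤ) + 1)).natAbs - 1 = n by omega]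
  simpa [two_mul] using hpos.of_nat_of_neg_add_one hneg

lemma pow_natAbs_sq_le_cubeMajorant {x : ℝ} (h0 : 0 ≤ x) (h1 : x ≤ 1) {n : ℤ} (hn : n ≠ 0) :
    x ^ (n.natAbs ^ 2) ≤ cubeMajorant x n := by
  obtain ⟨k, hk⟩ := Nat.exists_eq_add_one_of_ne_zero (Int.natAbs_ne_zero.mpr hn)
  rw [cubeMajorant, if_neg hn, hk, Nat.add_sub_cancel, ← pow_mul, ← pow_succ']
  exact pow_le_pow_of_le_one h0 h1 (by nlinarith [Nat.le_self_pow two_ne_zero k])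

lemma exp_neg_pi_le_cubeMajorant {c t : ℝ} (hc : 0 ≤ c) {n : ℤ} (hn : n ≠ 0)
    (ht : c * n ^ 2 ≤ t) : Real.exp (-π * t) ≤ cubeMajorant (Real.exp (-π * c)) n := by
  calc Real.exp (-π * t) ≤ Real.exp (-π * c) ^ (n.natAbs ^ 2) := by
        rw [← Real.exp_nat_mul, Real.exp_le_exp]
        push_cast
        rw [Nat.cast_natAbs, Int.cast_abs, sq_abs]
        nlinarith [pi_pos]
    _ ≤ _ := pow_natAbs_sq_le_cubeMajorant (Real.exp_pos _).le
          (Real.exp_le_one_iff.mpr (by nlinarith [pi_pos])) hn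

lemma tailBound_mono {x y : ℝ} (hx : 0 ≤ x) (hxy : x ≤ y) (hy : y < 1) :
    0 ≤ tailBound x ∧ tailBound x ≤ tailBound y := by
  have hy3 : y ^ 3 < 1 := pow_lt_one₀ (hx.trans hxy) hy three_ne_zero
  have hxy3 : x ^ 3 ≤ y ^ 3 := pow_le_pow_left₀ hx hxy 3
  exact ⟨div_nonneg hx (by linarith), div_le_div₀ (hx.trans hxy) hxy (by linarith) (by linarith)⟩

def imQuadForm (τ : Mat2) (p q : ℝ) : ℝ := y1 τ * p ^ 2 + 2 * y3 τ * p * q + y2 τ * q ^ 2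

lemma lambda1_le_y1 (τ : Mat2) : lambda1 τ ≤ y1 τ := by
  have : |y1 τ - y2 τ| ≤ √((y1 τ - y2 τ) ^ 2 + 4 * y3 τ ^ 2) :=
    Real.abs_le_sqrt (by nlinarith [sq_nonneg (y3 τ)])
  unfold lambda1
  linarith [le_abs_self (y1 τ - y2 τ), neg_abs_le (y1 τ - y2 τ)]

lemma lambda1_le_y2 (τ : Mat2) : lambda1 τ ≤ y2 τ := by
  have : |y1 τ - y2 τ| ≤ √((y1 τ - y2 τ) ^ 2 + 4 * y3 τ ^ 2) :=
    Real.abs_le_sqrt (by nlinarith [sq_nonneg (y3 τ)])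
  unfold lambda1
  linarith [le_abs_self (y1 τ - y2 τ), neg_abs_le (y1 τ - y2 τ)]

lemma sq_y3_le_of_le_lambda1 {τ : Mat2} {c : ℝ} (hc : c ≤ lambda1 τ) :
    y3 τ ^ 2 ≤ (y1 τ - c) * (y2 τ - c) := by
  have hs := Real.sq_sqrt (by positivity : 0 ≤ (y1 τ - y2 τ) ^ 2 + 4 * y3 τ ^ 2)
  have hle : √((y1 τ - y2 τ) ^ 2 + 4 * y3 τ ^ 2) ≤ y1 τ + y2 τ - 2 * c := by
    unfold lambda1 at hc; linarith
  nlinarith [Real.sqrt_nonneg ((y1 τ - y2 τ) ^ 2 + 4 * y3 τ ^ 2)]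

lemma quadratic_nonneg_of_sq_le_mul {A B C : ℝ} (hA : 0 ≤ A) (hB : 0 ≤ B) (hC : C ^ 2 ≤ A * B)
    (p q : ℝ) : 0 ≤ A * p ^ 2 + 2 * C * p * q + B * q ^ 2 := by
  rcases hA.eq_or_lt with rfl | hA
  · obtain rfl : C = 0 := by nlinarith [sq_nonneg C]
    nlinarith [sq_nonneg q]
  · refine nonneg_of_mul_nonneg_right ?_ hA
    nlinarith [sq_nonneg (A * p + C * q), sq_nonneg q]

lemma mul_sq_add_sq_le_imQuadForm {τ : Mat2} {c : ℝ} (hc : c ≤ lambda1 τ) (p q : ℝ) :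
    c * (p ^ 2 + q ^ 2) ≤ imQuadForm τ p q := by
  have := quadratic_nonneg_of_sq_le_mul (sub_nonneg.mpr (hc.trans (lambda1_le_y1 τ)))
    (sub_nonneg.mpr (hc.trans (lambda1_le_y2 τ))) (sq_y3_le_of_le_lambda1 hc) p q
  unfold imQuadForm
  linarith

def thetaTerm (a b : Fin 2 → ℤ) (τ : Mat2) (m : Fin 2 → ℤ) : ℂ :=
  Complex.exp ((Real.pi : ℂ) * Complex.I *
      ((∑ i : Fin 2, ∑ j : Fin 2,
          ((m i : ℂ) + (a i : ℂ) / 2) * τ i j * ((m j : ℂ) + (a j : ℂ) / 2)) +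
        ∑ i : Fin 2, ((m i : ℂ) + (a i : ℂ) / 2) * ((b i : ℂ) / 2)))

lemma thetaTerm_zero (b : Fin 2 → ℤ) (τ : Mat2) : thetaTerm 0 b τ 0 = 1 := by
  simp [thetaTerm]

lemma norm_thetaTerm_zero {τ : Mat2} (hτ : τ.IsSymm) (b m : Fin 2 → ℤ) :
    ‖thetaTerm 0 b τ m‖ = Real.exp (-π * imQuadForm τ (m 0) (m 1)) := by
  have h10 : τ 1 0 = τ 0 1 := by simpa using congrFun (congrFun hτ 0) 1
  rw [thetaTerm, Complex.norm_exp]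
  congr 1
  simp [Fin.sum_univ_two, Complex.mul_re, Complex.mul_im, h10, imQuadForm, y1, y2, y3, z1, z2, z3]
  ring

def thetaMajorant (a b : ℝ) (m : Fin 2 → ℤ) : ℝ :=
  cubeMajorant a (m 0) * (Pi.single 0 1 : ℤ → ℝ) (m 1) +
    (Pi.single 0 1 : ℤ → ℝ) (m 0) * cubeMajorant a (m 1) +
    cubeMajorant b (m 0) * cubeMajorant b (m 1)

lemma thetaMajorant_zero (a b : ℝ) : thetaMajorant a b 0 = 0 := by
  simp [thetaMajorant, cubeMajorant_zero]

lemma hasSum_thetaMajorant {a b : ℝ} (ha0 : 0 ≤ a) (ha1 : a < 1) (hb0 : 0 ≤ b) (hb1 : b < 1) :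
    HasSum (thetaMajorant a b) (4 * tailBound a + 4 * tailBound b ^ 2) := by
  have ha := hasSum_cubeMajorant ha0 ha1
  have hb := hasSum_cubeMajorant hb0 hb1
  have hδ := hasSum_pi_single (0 : ℤ) (1 : ℝ)
  have hδ0 : 0 ≤ (Pi.single 0 1 : ℤ → ℝ) := Pi.single_nonneg.mpr zero_le_one
  have hsum := ((hasSum_fin_two_mul ha hδ (cubeMajorant_nonneg ha0) hδ0).add
    (hasSum_fin_two_mul hδ ha hδ0 (cubeMajorant_nonneg ha0))).add
    (hasSum_fin_two_mul hb hb (cubeMajorant_nonneg hb0) (cubeMajorant_nonneg hb0))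
  rw [show 4 * tailBound a + 4 * tailBound b ^ 2 =
    2 * tailBound a * 1 + 1 * (2 * tailBound a) + 2 * tailBound b * (2 * tailBound b) by ring]
  exact hsum

lemma exp_neg_pi_imQuadForm_le_thetaMajorant {τ : Mat2} {α β : ℝ} (hα : 0 ≤ α)
    (hβ : 0 ≤ β) (hy1 : α ≤ y1 τ) (hy2 : α ≤ y2 τ) (hl : β ≤ lambda1 τ)
    {m : Fin 2 → ℤ} (hm : m ≠ 0) :
    Real.exp (-π * imQuadForm τ (m 0) (m 1)) ≤
      thetaMajorant (Real.exp (-π * α)) (Real.exp (-π * β)) m := by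
  have hm' : m 0 ≠ 0 ∨ m 1 ≠ 0 := by
    by_contra! h
    exact hm (funext fun i => by fin_cases i <;> simp [h.1, h.2])
  by_cases h0 : m 0 = 0
  · have h1 := hm'.resolve_left (not_not.mpr h0)
    have hQ : imQuadForm τ (m 0) (m 1) = y2 τ * (m 1 : ℝ) ^ 2 := by simp [imQuadForm, h0]
    rw [hQ]
    simp only [thetaMajorant, h0, cubeMajorant_zero, Pi.single_eq_same,
      Pi.single_eq_of_ne h1, zero_mul, mul_zero, one_mul, add_zero, zero_add]
    exact exp_neg_pi_le_cubeMajorant hα h1 (mul_le_mul_of_nonneg_right hy2 (sq_nonneg _))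
  by_cases h1 : m 1 = 0
  · have hQ : imQuadForm τ (m 0) (m 1) = y1 τ * (m 0 : ℝ) ^ 2 := by simp [imQuadForm, h1]
    rw [hQ]
    simp only [thetaMajorant, h1, cubeMajorant_zero, Pi.single_eq_same,
      Pi.single_eq_of_ne h0, mul_zero, mul_one, add_zero]
    exact exp_neg_pi_le_cubeMajorant hα h0 (mul_le_mul_of_nonneg_right hy1 (sq_nonneg _))
  · simp only [thetaMajorant, Pi.single_eq_of_ne h0, Pi.single_eq_of_ne h1, mul_zero, zero_mul,
      zero_add]
    have hQ := mul_sq_add_sq_le_imQuadForm hl (m 0) (m 1)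
    calc Real.exp (-π * imQuadForm τ (m 0) (m 1))
        ≤ Real.exp (-π * (β * (m 0) ^ 2)) * Real.exp (-π * (β * (m 1) ^ 2)) := by
          rw [← Real.exp_add, Real.exp_le_exp]
          nlinarith [pi_pos]
      _ ≤ _ := mul_le_mul (exp_neg_pi_le_cubeMajorant hβ h0 le_rfl)
          (exp_neg_pi_le_cubeMajorant hβ h1 le_rfl) (Real.exp_pos _).le
          (cubeMajorant_nonneg (Real.exp_pos _).le _)

lemma norm_theta_zero_sub_one_le {τ : Mat2} (hτ : τ.IsSymm) {α β : ℝ} (hα : 0 < α)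
    (hβ : 0 < β) (hy1 : α ≤ y1 τ) (hy2 : α ≤ y2 τ) (hl : β ≤ lambda1 τ) (b : Fin 2 → ℤ) :
    ‖theta 0 b τ - 1‖ ≤
      4 * tailBound (Real.exp (-π * α)) + 4 * tailBound (Real.exp (-π * β)) ^ 2 := by
  have hlt : ∀ {c : ℝ}, 0 < c → Real.exp (-π * c) < 1 := fun hc =>
    Real.exp_lt_one_iff.mpr (by nlinarith [pi_pos])
  have hM := hasSum_thetaMajorant (Real.exp_pos _).le (hlt hα) (Real.exp_pos _).le (hlt hβ)
  rw [← thetaTerm_zero b τ]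
  exact norm_tsum_sub_le (f := thetaTerm 0 b τ) hM 0 (thetaMajorant_zero _ _).ge fun m hm => by
    rw [norm_thetaTerm_zero hτ]
    exact exp_neg_pi_imQuadForm_le_thetaMajorant hα.le hβ.le hy1 hy2 hl hm

lemma exists_thetaIdx_eq_theta_zero {j : ℕ} (hj : j ≤ 3) (τ : Mat2) :
    ∃ b, thetaIdx j τ = theta 0 b τ := by
  refine ⟨![((j % 2 : ℕ) : ℤ), ((j / 2 % 2 : ℕ) : ℤ)], ?_⟩
  unfold thetaIdx
  congr 1
  ext i
  fin_cases i <;> simp [Nat.div_eq_of_lt (by omega : j < 4), Nat.div_eq_of_lt (by omega : j < 8)]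

lemma goodPosition_thetaIdx {τ : Mat2} (hτ : τ.IsSymm) {α β : ℝ} (hα : 0 < α)
    (hβ : 0 < β) (hy1 : α ≤ y1 τ) (hy2 : α ≤ y2 τ) (hl : β ≤ lambda1 τ)
    (hbound : (4 * tailBound (Real.exp (-π * α)) +
      4 * tailBound (Real.exp (-π * β)) ^ 2) ^ 2 < 1 / 2) :
    GoodPosition {z : ℂ | ∃ j ≤ 3, z = thetaIdx j τ} := by
  refine goodPosition_of_norm_sub_one_le hbound ?_
  rintro _ ⟨j, hj, rfl⟩
  obtain ⟨b, hb⟩ := exists_thetaIdx_eq_theta_zero hj τ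
  rw [hb]
  exact norm_theta_zero_sub_one_le hτ hα hβ hy1 hy2 hl b

lemma le_exp_pi_div_five : (1.874 : ℝ) ≤ Real.exp (π / 5) := by
  have hpi : (0.6283184 : ℝ) ≤ π / 5 := by linarith [pi_gt_d6]
  have hTaylor := (abs_sub_le_iff.mp (Real.exp_bound (x := 0.6283184)
    (by rw [abs_of_nonneg] <;> norm_num) (n := 6) (by norm_num))).2
  rw [abs_of_nonneg (by norm_num : (0 : ℝ) ≤ 0.6283184)] at hTaylor
  norm_num [Finset.sum_range_succ, Nat.factorial] at hTaylor
  linarith [Real.exp_le_exp.mpr hpi]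

lemma exp_neg_pi_mul_div_five_le (k : ℕ) : Real.exp (-π * (k / 5)) ≤ (1.874 ^ k)⁻¹ := by
  rw [show -π * (k / 5) = -(k * (π / 5)) by ring, Real.exp_neg, Real.exp_nat_mul]
  exact inv_anti₀ (by positivity) (pow_le_pow_left₀ (by norm_num) le_exp_pi_div_five k)

lemma thetaBound_four_fifths_two_fifths :
    (4 * tailBound (Real.exp (-π * (4 / 5))) +
      4 * tailBound (Real.exp (-π * (2 / 5))) ^ 2) ^ 2 < 1 / 2 := by
  have ha := tailBound_mono (Real.exp_pos _).le
    (by exact_mod_cast exp_neg_pi_mul_div_five_le 4) (by norm_num : ((1.874 : ℝ) ^ 4)⁻¹ < 1)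
  have hb := tailBound_mono (Real.exp_pos _).le
    (by exact_mod_cast exp_neg_pi_mul_div_five_le 2) (by norm_num : ((1.874 : ℝ) ^ 2)⁻¹ < 1)
  calc _ ≤ (4 * tailBound ((1.874 : ℝ) ^ 4)⁻¹ + 4 * tailBound ((1.874 : ℝ) ^ 2)⁻¹ ^ 2) ^ 2 := by
        gcongr
        exacts [add_nonneg (mul_nonneg zero_le_four ha.1) (by positivity), ha.2, hb.1, hb.2]
    _ < 1 / 2 := by norm_num [tailBound]

lemma thetaBound_three_fifths :
    (4 * tailBound (Real.exp (-π * (3 / 5))) +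
      4 * tailBound (Real.exp (-π * (3 / 5))) ^ 2) ^ 2 < 1 / 2 := by
  have ha := tailBound_mono (Real.exp_pos _).le
    (by exact_mod_cast exp_neg_pi_mul_div_five_le 3) (by norm_num : ((1.874 : ℝ) ^ 3)⁻¹ < 1)
  calc _ ≤ (4 * tailBound ((1.874 : ℝ) ^ 3)⁻¹ + 4 * tailBound ((1.874 : ℝ) ^ 3)⁻¹ ^ 2) ^ 2 := by
        gcongr
        exacts [add_nonneg (mul_nonneg zero_le_four ha.1) (by positivity), ha.2, ha.1, ha.2]
    _ < 1 / 2 := by norm_num [tailBound]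

/-- If r(τ) ≥ 0.4, or if λ₁(τ) ≥ 0.6, then θ₀(τ), …, θ₃(τ) are in good position. -/
theorem stmt_12 (τ : Mat2) (hτ : inH2 τ) :
    (0.4 ≤ rmin τ → GoodPosition {z : ℂ | ∃ j ≤ 3, z = thetaIdx j τ}) ∧
    (0.6 ≤ lambda1 τ → GoodPosition {z : ℂ | ∃ j ≤ 3, z = thetaIdx j τ}) := by
  constructor
  · intro h
    simp only [rmin, le_min_iff] at h
    obtain ⟨hl, hy1, hy2⟩ := h
    exact goodPosition_thetaIdx hτ.1 (α := 4 / 5) (β := 2 / 5) (by norm_num) (by norm_num)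
      (by linarith) (by linarith) (by linarith) thetaBound_four_fifths_two_fifths
  · intro h
    exact goodPosition_thetaIdx hτ.1 (α := 3 / 5) (β := 3 / 5) (by norm_num) (by norm_num)
      (by linarith [lambda1_le_y1 τ]) (by linarith [lambda1_le_y2 τ]) (by linarith)
      thetaBound_three_fifths
end
end

section
/- For every τ ∈ 𝓕′, one has r(γ₁τ) ≥ 9·y₁(τ)/(34·|z₁(τ)|²), r(γ₂τ) ≥ 9·y₂(τ)/(34·|z₂(τ)|²), and λ₁(γ₃τ) ≥ 9/(44·y₂(τ)). -/
open Complex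

noncomputable section

/-!
The actions of `γ₁` and `γ₃` are explicit: writing `Y = Im τ`, the imaginary parts of
`γ₁τ = [[-1 - 1/z₁, -z₃/z₁], [-z₃/z₁, z₂ - z₃²/z₁]]` and of `γ₃τ` are polynomials in the real
coordinates of `τ` divided by `N = |z₁|²`, resp. `|det τ|²`, and `det Im(γτ) = det Y / N`.
Since `m ≤ λ₁(σ)` as soon as `m · tr Im σ ≤ det Im σ` (with `tr Im σ > 0`, `m ≥ 0`), each claim
becomes a polynomial inequality on `𝓕′`; these follow from `det Y ≥ (3/4) y₁ y₂`, Cauchy–Schwarz,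
and, for `γ₃`, from `-Im((z₁ + z₂) · conj(det τ)) - tr Y · det Y` being a positive semidefinite
quadratic form in `x₁, x₂, x₃` (which also shows `det τ ≠ 0`).
The bound for `γ₁` only uses hypotheses symmetric in `y₁, y₂`, and `γ₂` is `γ₁` conjugated by
the swap of the two coordinates, so the bound for `γ₂` is the one for `γ₁` at the swapped matrix.
-/

open ComplexConjugate

lemma normSq_mul_det_lower_bounds {p q u v w : ℝ} (hp : p ^ 2 ≤ 1/4) (hq : q ^ 2 ≤ 1/4)
    (hv : 3/4 ≤ v ^ 2) (hu0 : 0 < u) (hv0 : 0 < v) (hw : 4 * w ^ 2 ≤ u * v)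
    (hN : 1 ≤ p ^ 2 + u ^ 2) :
    9 * u ^ 2 ≤ 17 * ((p ^ 2 + u ^ 2) * (u * v - w ^ 2)) ∧
      9 * (u ^ 2 + (q * u - p * w) ^ 2) ≤ 25 * ((p ^ 2 + u ^ 2) * (u * v - w ^ 2)) := by
  have hd : 0 ≤ u * v - w ^ 2 := by nlinarith
  have hNd : 3/5 * u ^ 2 ≤ (p ^ 2 + u ^ 2) * (u * v - w ^ 2) := by
    have hNu : u ≤ p ^ 2 + u ^ 2 := by nlinarith
    have hv' : 4/5 ≤ v := by nlinarith
    calc 3/5 * u ^ 2 = 3/4 * (u * (4/5)) * u := by ring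
      _ ≤ 3/4 * (u * v) * (p ^ 2 + u ^ 2) := by gcongr
      _ ≤ (p ^ 2 + u ^ 2) * (u * v - w ^ 2) := by nlinarith
  -- Cauchy–Schwarz, with `p ^ 2 + q ^ 2 ≤ 1/2`
  have hs : (q * u - p * w) ^ 2 ≤ (u ^ 2 + w ^ 2) / 2 := by
    nlinarith [sq_nonneg (q * w + p * u), mul_le_mul_of_nonneg_right hq (sq_nonneg u),
      mul_le_mul_of_nonneg_right hp (sq_nonneg w), mul_le_mul_of_nonneg_right hq (sq_nonneg w),
      mul_le_mul_of_nonneg_right hp (sq_nonneg u)]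
  have hN1 : u * v - w ^ 2 ≤ (p ^ 2 + u ^ 2) * (u * v - w ^ 2) := le_mul_of_one_le_left hd hN
  constructor <;> nlinarith

lemma sq_le_quarter_of_abs_le_half {x : ℝ} (h : |x| ≤ 1/2) : x ^ 2 ≤ 1/4 := by
  nlinarith [sq_abs x, abs_nonneg x]

lemma three_quarters_le_sq {y : ℝ} (h : √3 / 2 ≤ y) : 3/4 ≤ y ^ 2 := by
  nlinarith [Real.sq_sqrt (show (0:ℝ) ≤ 3 by norm_num), Real.sqrt_nonneg 3]

lemma four_sq_le_mul_of_two_abs_le {w u v : ℝ} (hu : 2 * |w| ≤ u) (hv : 2 * |w| ≤ v) :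
    4 * w ^ 2 ≤ u * v := by
  calc 4 * w ^ 2 = (2 * |w|) * (2 * |w|) := by rw [← sq_abs]; ring
    _ ≤ u * v := mul_le_mul hu hv (by positivity) (by linarith [abs_nonneg w])

lemma quadratic_form_nonneg {p q r u v w : ℝ} (hu0 : 0 < u) (hv0 : 0 < v)
    (hd : 0 ≤ u * v - w ^ 2) :
    0 ≤ p ^ 2 * v + r ^ 2 * u + (u + v) * q ^ 2 - 2 * (p + r) * q * w := by
  have key : u * v * (p ^ 2 * v + r ^ 2 * u + (u + v) * q ^ 2 - 2 * (p + r) * q * w) =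
      u * v ^ 2 * (p - q * w / v) ^ 2 + u ^ 2 * v * (r - q * w / u) ^ 2 +
        q ^ 2 * (u + v) * (u * v - w ^ 2) := by
    field_simp; ring
  have : 0 ≤ u * v * (p ^ 2 * v + r ^ 2 * u + (u + v) * q ^ 2 - 2 * (p + r) * q * w) := by
    rw [key]; positivity
  exact nonneg_of_mul_nonneg_right (by linarith) (mul_pos hu0 hv0)

lemma quadratic_form_le {p q r u v w : ℝ} (hp : p ^ 2 ≤ 1/4) (hq : q ^ 2 ≤ 1/4)
    (hr : r ^ 2 ≤ 1/4) (hu0 : 0 < u) (huv : u ≤ v) (hw : 2 * |w| ≤ v) :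
    p ^ 2 * v + r ^ 2 * u + (u + v) * q ^ 2 - 2 * (p + r) * q * w ≤ 3/2 * v := by
  have hprq : |(p + r) * q| ≤ 1/2 := by
    refine abs_le_of_sq_le_sq ?_ (by norm_num)
    have hpr : (p + r) ^ 2 ≤ 1 := by nlinarith [sq_nonneg (p - r)]
    rw [mul_pow]
    nlinarith [mul_le_mul hpr hq (sq_nonneg q) zero_le_one]
  have hcross : -(2 * (p + r) * q * w) ≤ |w| := by
    have := neg_abs_le ((p + r) * q * w)
    rw [abs_mul] at this
    nlinarith [abs_nonneg w]
  nlinarith [mul_le_mul_of_nonneg_right hp (by linarith : 0 ≤ v),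
    mul_le_mul_of_nonneg_right hr hu0.le, mul_le_mul_of_nonneg_left hq (by linarith : 0 ≤ u + v)]

def imDet (σ : Mat2) : ℝ := y1 σ * y2 σ - y3 σ ^ 2

lemma le_lambda1 {σ : Mat2} {m : ℝ} (hm : 0 ≤ m) (htr : 0 < y1 σ + y2 σ)
    (h : m * (y1 σ + y2 σ) ≤ imDet σ) : m ≤ lambda1 σ := by
  unfold imDet at h
  have hsqrt : √((y1 σ - y2 σ) ^ 2 + 4 * y3 σ ^ 2) ≤ y1 σ + y2 σ - 2 * m := by
    have h2m : 2 * m ≤ y1 σ + y2 σ := by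
      nlinarith [sq_nonneg (y1 σ - y2 σ), sq_nonneg (y3 σ)]
    rw [Real.sqrt_le_left (by linarith)]
    nlinarith
  unfold lambda1
  linarith

lemma le_rmin {σ : Mat2} {m : ℝ} (hm : 0 < m) (h1 : 2 * m ≤ y1 σ) (h2 : 2 * m ≤ y2 σ)
    (h : m * (y1 σ + y2 σ) ≤ imDet σ) : m ≤ rmin σ :=
  le_min (le_lambda1 hm.le (by linarith) h) (le_min (by linarith) (by linarith))

lemma eq_of_isSymm {τ : Mat2} (hτ : τ.IsSymm) : τ = !![z1 τ, z3 τ; z3 τ, z2 τ] := by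
  have := Matrix.eta_fin_two τ
  rwa [hτ.apply 0 1] at this

lemma det_eq_of_isSymm {τ : Mat2} (hτ : τ.IsSymm) : τ.det = z1 τ * z2 τ - z3 τ ^ 2 := by
  rw [Matrix.det_fin_two, hτ.apply 0 1, sq]; rfl

lemma actBlocks_eq_of_mul_eq {A B C D τ X : Mat2} (hdet : (C * τ + D).det ≠ 0)
    (h : X * (C * τ + D) = A * τ + B) : actBlocks A B C D τ = X := by
  rw [actBlocks, ← h, Matrix.mul_assoc, Matrix.mul_nonsing_inv _ (isUnit_iff_ne_zero.mpr hdet),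
    Matrix.mul_one]

section
variable {τ : Mat2}

lemma gammaAction_one_eq (hτ : τ.IsSymm) (h : z1 τ ≠ 0) :
    gammaAction 1 τ =
      !![-1 - 1 / z1 τ, -z3 τ / z1 τ; -z3 τ / z1 τ, z2 τ - z3 τ ^ 2 / z1 τ] := by
  have hCD : Smat 1 * τ + (-1 + Smat 1 ^ 2) = !![z1 τ, z3 τ; 0, -1] := by
    conv_lhs => rw [eq_of_isSymm hτ]
    ext i j; fin_cases i <;> fin_cases j <;> simp [Smat, sq]
  refine actBlocks_eq_of_mul_eq ?_ ?_
  · rw [hCD, Matrix.det_fin_two_of]; simpa using h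
  · rw [hCD]; conv_rhs => rw [eq_of_isSymm hτ]
    ext i j; fin_cases i <;> fin_cases j <;> simp [Smat] <;> field_simp <;> ring

lemma gammaAction_two_eq (hτ : τ.IsSymm) (h : z2 τ ≠ 0) :
    gammaAction 2 τ =
      !![z1 τ - z3 τ ^ 2 / z2 τ, -z3 τ / z2 τ; -z3 τ / z2 τ, -1 - 1 / z2 τ] := by
  have hCD : Smat 2 * τ + (-1 + Smat 2 ^ 2) = !![-1, 0; z3 τ, z2 τ] := by
    conv_lhs => rw [eq_of_isSymm hτ]
    ext i j; fin_cases i <;> fin_cases j <;> simp [Smat, sq]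
  refine actBlocks_eq_of_mul_eq ?_ ?_
  · rw [hCD, Matrix.det_fin_two_of]; simpa using h
  · rw [hCD]; conv_rhs => rw [eq_of_isSymm hτ]
    ext i j; fin_cases i <;> fin_cases j <;> simp [Smat] <;> field_simp <;> ring

lemma gammaAction_three_eq (hτ : τ.IsSymm) (h : τ.det ≠ 0) :
    gammaAction 3 τ =
      !![-z1 τ / τ.det, z3 τ / τ.det - 1; z3 τ / τ.det - 1, -z2 τ / τ.det] := by
  rw [det_eq_of_isSymm hτ] at h ⊢
  have hCD : Smat 3 * τ + (-1 + Smat 3 ^ 2) = !![z3 τ, z2 τ; z1 τ, z3 τ] := by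
    conv_lhs => rw [eq_of_isSymm hτ]
    ext i j; fin_cases i <;> fin_cases j <;> simp [Smat, sq]
  refine actBlocks_eq_of_mul_eq ?_ ?_
  · rw [hCD, Matrix.det_fin_two_of]; contrapose! h; linear_combination -h
  · rw [hCD]; conv_rhs => rw [eq_of_isSymm hτ]
    ext i j; fin_cases i <;> fin_cases j <;> simp [Smat] <;> field_simp <;> ring

end

def swapDiag (τ : Mat2) : Mat2 := !![z2 τ, z3 τ; z3 τ, z1 τ]

lemma isSymm_swapDiag (τ : Mat2) : (swapDiag τ).IsSymm :=
  Matrix.IsSymm.ext fun i j => by fin_cases i <;> fin_cases j <;> rfl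

lemma rmin_swapDiag (σ : Mat2) : rmin (swapDiag σ) = rmin σ := by
  change min ((y2 σ + y1 σ - √((y2 σ - y1 σ) ^ 2 + 4 * y3 σ ^ 2)) / 2)
    (min (y2 σ / 2) (y1 σ / 2)) = rmin σ
  rw [add_comm, sub_sq_comm, min_comm (y2 σ / 2)]
  rfl

lemma gammaAction_two_eq_swapDiag {τ : Mat2} (hτ : τ.IsSymm) (h : z2 τ ≠ 0) :
    gammaAction 2 τ = swapDiag (gammaAction 1 (swapDiag τ)) := by
  rw [gammaAction_two_eq hτ h, gammaAction_one_eq (isSymm_swapDiag τ) h]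
  ext i j; fin_cases i <;> fin_cases j <;> rfl

lemma im_div_eq (a w : ℂ) : (a / w).im = (a * conj w).im / normSq w := by
  rw [div_im, mul_im, conj_re, conj_im]; ring

lemma imDet_eq_div {σ : Mat2} {a b c d K : ℝ} (hK : K ≠ 0) (h1 : y1 σ = a / K)
    (h2 : y2 σ = b / K) (h3 : y3 σ = c / K) (h : a * b - c ^ 2 = K * d) :
    imDet σ = d / K := by
  rw [imDet, h1, h2, h3]
  field_simp
  linear_combination h

lemma im_gammaAction_one {τ : Mat2} (hτ : τ.IsSymm) (h : z1 τ ≠ 0) :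
    y1 (gammaAction 1 τ) = y1 τ / normSq (z1 τ) ∧
      y3 (gammaAction 1 τ) = (x3 τ * y1 τ - x1 τ * y3 τ) / normSq (z1 τ) ∧
      imDet (gammaAction 1 τ) = imDet τ / normSq (z1 τ) := by
  have hN : normSq (z1 τ) ≠ 0 := normSq_eq_zero.not.mpr h
  have hg := gammaAction_one_eq hτ h
  have e1 : y1 (gammaAction 1 τ) = y1 τ / normSq (z1 τ) := by
    rw [hg]; change (-1 - 1 / z1 τ).im = _
    rw [sub_im, im_div_eq]; simp [y1, neg_div]
  have e3 : y3 (gammaAction 1 τ) = (x3 τ * y1 τ - x1 τ * y3 τ) / normSq (z1 τ) := by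
    rw [hg]; change (-z3 τ / z1 τ).im = _
    rw [im_div_eq]; simp [x1, x3, y1, y3]; ring
  refine ⟨e1, e3, imDet_eq_div (b := normSq (z1 τ) * y2 τ - (z3 τ ^ 2 * conj (z1 τ)).im)
    hN e1 ?_ e3 ?_⟩
  · rw [hg]; change (z2 τ - z3 τ ^ 2 / z1 τ).im = _
    rw [sub_im, im_div_eq, sub_div, mul_div_cancel_left₀ _ hN]; rfl
  · rw [imDet, x1, x3, y1, y2, y3]
    simp only [normSq_apply, mul_im, mul_re, conj_re, conj_im, sq]
    ring

lemma neg_im_trace_mul_conj_det {τ : Mat2} (hτ : τ.IsSymm) :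
    -((z1 τ + z2 τ) * conj τ.det).im =
      x1 τ ^ 2 * y2 τ + x2 τ ^ 2 * y1 τ + (y1 τ + y2 τ) * x3 τ ^ 2 -
        2 * (x1 τ + x2 τ) * x3 τ * y3 τ + (y1 τ + y2 τ) * imDet τ := by
  rw [det_eq_of_isSymm hτ, imDet, x1, x2, x3, y1, y2, y3]
  simp only [mul_im, mul_re, add_re, add_im, conj_re, conj_im, sub_re, sub_im, sq]
  ring

lemma det_ne_zero_of_imDet_pos {τ : Mat2} (hτ : τ.IsSymm) (hy1 : 0 < y1 τ) (hy2 : 0 < y2 τ)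
    (hd : 0 < imDet τ) : τ.det ≠ 0 := by
  intro h
  have htr := neg_im_trace_mul_conj_det hτ
  rw [h, map_zero, mul_zero, zero_im, neg_zero] at htr
  have := quadratic_form_nonneg (p := x1 τ) (q := x3 τ) (r := x2 τ) hy1 hy2 hd.le
  nlinarith [mul_pos (add_pos hy1 hy2) hd]

lemma im_gammaAction_three {τ : Mat2} (hτ : τ.IsSymm) (h : τ.det ≠ 0) :
    y1 (gammaAction 3 τ) + y2 (gammaAction 3 τ) =
        -((z1 τ + z2 τ) * conj τ.det).im / normSq τ.det ∧
      imDet (gammaAction 3 τ) = imDet τ / normSq τ.det := by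
  have hK : normSq τ.det ≠ 0 := normSq_eq_zero.not.mpr h
  have hg := gammaAction_three_eq hτ h
  have e1 : y1 (gammaAction 3 τ) = -(z1 τ * conj τ.det).im / normSq τ.det := by
    rw [hg]; change (-z1 τ / τ.det).im = _; rw [neg_div, neg_im, im_div_eq, neg_div]
  have e2 : y2 (gammaAction 3 τ) = -(z2 τ * conj τ.det).im / normSq τ.det := by
    rw [hg]; change (-z2 τ / τ.det).im = _; rw [neg_div, neg_im, im_div_eq, neg_div]
  have e3 : y3 (gammaAction 3 τ) = (z3 τ * conj τ.det).im / normSq τ.det := by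
    rw [hg]; change (z3 τ / τ.det - 1).im = _; rw [sub_im, one_im, sub_zero, im_div_eq]
  refine ⟨by rw [e1, e2, add_mul, add_im]; ring, imDet_eq_div hK e1 e2 e3 ?_⟩
  rw [det_eq_of_isSymm hτ, imDet, y1, y2, y3]
  simp only [normSq_apply, mul_im, mul_re, conj_re, conj_im, sub_re, sub_im, sq]
  ring

lemma rmin_gammaAction_one_ge {τ : Mat2} (hτ : τ.IsSymm) (hx1 : |x1 τ| ≤ 1/2)
    (hx3 : |x3 τ| ≤ 1/2) (hy1 : √3 / 2 ≤ y1 τ) (hy2 : √3 / 2 ≤ y2 τ)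
    (hw1 : 2 * |y3 τ| ≤ y1 τ) (hw2 : 2 * |y3 τ| ≤ y2 τ) (hz1 : 1 ≤ ‖z1 τ‖) :
    9 * y1 τ / (34 * ‖z1 τ‖ ^ 2) ≤ rmin (gammaAction 1 τ) := by
  have hu0 : 0 < y1 τ := lt_of_lt_of_le (by positivity) hy1
  have hv0 : 0 < y2 τ := lt_of_lt_of_le (by positivity) hy2
  have hN : ‖z1 τ‖ ^ 2 = x1 τ ^ 2 + y1 τ ^ 2 := by
    rw [Complex.sq_norm, normSq_apply, x1, y1]; ring
  have hN1 : 1 ≤ x1 τ ^ 2 + y1 τ ^ 2 := by rw [← hN]; nlinarith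
  obtain ⟨h17, h25⟩ := normSq_mul_det_lower_bounds (q := x3 τ)
    (sq_le_quarter_of_abs_le_half hx1) (sq_le_quarter_of_abs_le_half hx3)
    (three_quarters_le_sq hy2) hu0 hv0
    (four_sq_le_mul_of_two_abs_le hw1 hw2) hN1
  obtain ⟨e1, e3, edet⟩ := im_gammaAction_one hτ (norm_pos_iff.mp (by linarith))
  rw [← Complex.sq_norm, hN] at e1 e3 edet
  set σ := gammaAction 1 τ
  set N := x1 τ ^ 2 + y1 τ ^ 2
  have hN0 : 0 < N := by positivity
  have e2 : y2 σ = (N * imDet τ + (x3 τ * y1 τ - x1 τ * y3 τ) ^ 2) / (N * y1 τ) := by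
    have : y1 σ * y2 σ = imDet σ + y3 σ ^ 2 := by rw [imDet]; ring
    rw [e1, e3, edet] at this
    field_simp at this ⊢
    linear_combination this
  rw [hN]
  change 9 * y1 τ ^ 2 ≤ 17 * (N * imDet τ) at h17
  change 9 * (y1 τ ^ 2 + _) ≤ 25 * (N * imDet τ) at h25
  apply le_rmin (by positivity)
  · rw [e1]; field_simp; norm_num
  · rw [e2]; field_simp; nlinarith [sq_nonneg (y1 τ * x3 τ - x1 τ * y3 τ)]
  · rw [e1, e2, edet]; field_simp; nlinarith

lemma lambda1_gammaAction_three_ge {τ : Mat2} (hτ : τ.IsSymm) (hx1 : |x1 τ| ≤ 1/2)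
    (hx2 : |x2 τ| ≤ 1/2) (hx3 : |x3 τ| ≤ 1/2) (hy1 : √3 / 2 ≤ y1 τ)
    (hy12 : y1 τ ≤ y2 τ) (hw : 2 * |y3 τ| ≤ y1 τ) :
    9 / (44 * y2 τ) ≤ lambda1 (gammaAction 3 τ) := by
  have hu0 : 0 < y1 τ := lt_of_lt_of_le (by positivity) hy1
  have hv0 : 0 < y2 τ := hu0.trans_le hy12
  have hd : 9/16 ≤ imDet τ := by
    have := four_sq_le_mul_of_two_abs_le hw hw
    have := three_quarters_le_sq hy1
    unfold imDet; nlinarith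
  have hd0 : 0 < imDet τ := by linarith
  have hΔ := det_ne_zero_of_imDet_pos hτ hu0 hv0 hd0
  have hK : 0 < normSq τ.det := normSq_pos.mpr hΔ
  obtain ⟨etr, edet⟩ := im_gammaAction_three hτ hΔ
  rw [neg_im_trace_mul_conj_det hτ] at etr
  have hlow := quadratic_form_nonneg (p := x1 τ) (q := x3 τ) (r := x2 τ) (w := y3 τ) hu0 hv0
    (le_of_lt hd0)
  have hup := quadratic_form_le (sq_le_quarter_of_abs_le_half hx1)
    (sq_le_quarter_of_abs_le_half hx3) (sq_le_quarter_of_abs_le_half hx2) hu0 hy12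
    (hw.trans hy12)
  apply le_lambda1 (by positivity)
  · rw [etr]; exact div_pos (by nlinarith [mul_pos (add_pos hu0 hv0) hd0]) hK
  · rw [etr, edet]; field_simp; nlinarith [mul_le_mul_of_nonneg_right hy12 hd0.le]

/-- Lower bounds on r(γ₁τ), r(γ₂τ) and λ₁(γ₃τ) for τ ∈ 𝓕′. -/
theorem stmt_13 (τ : Mat2) (hτ : inF' τ) :
    9 * y1 τ / (34 * ‖z1 τ‖ ^ 2) ≤ rmin (gammaAction 1 τ) ∧
    9 * y2 τ / (34 * ‖z2 τ‖ ^ 2) ≤ rmin (gammaAction 2 τ) ∧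
    9 / (44 * y2 τ) ≤ lambda1 (gammaAction 3 τ) := by
  obtain ⟨⟨hsym, -⟩, hx1, hx2, hx3, hw, hy12, hy1, hz1, hz2⟩ := hτ
  have hy2 : √3 / 2 ≤ y2 τ := hy1.trans hy12
  have hw2 : 2 * |y3 τ| ≤ y2 τ := hw.trans hy12
  refine ⟨rmin_gammaAction_one_ge hsym hx1 hx3 hy1 hy2 hw hw2 hz1, ?_,
    lambda1_gammaAction_three_ge hsym hx1 hx2 hx3 hy1 hy12 hw⟩
  rw [gammaAction_two_eq_swapDiag hsym (norm_pos_iff.mp (by linarith)), rmin_swapDiag]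
  exact rmin_gammaAction_one_ge (isSymm_swapDiag τ) hx2 hx3 hy2 hy1 hw2 hw hz2
end
end
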